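/- arXiv:2410.18820 — 8 statements merged into one kernel-verified Lean document; each statement's English description precedes it below -/
import Mathlib

section
/- Any maximal common independent set of two matroids on the same ground set has size at least half the size of a maximum common independent set. -/
/-!
Every element of a maximum common independent set `T` that is not in a maximal one `S` cannot be
added to `S`, so it is spanned by `S` in `M₁` or in `M₂`. Hence `T` splits into an independent
subset of `M₁.closure S` and one of `M₂.closure S`, each of size at most `|S|`.
-/

open Set

namespace Matroid

variable {α : Type*}

lemma Indep.encard_le_of_subset_closure {M : Matroid α} {I X : Set α} (hI : M.Indep I)
    (hIX : I ⊆ M.closure X) : I.encard ≤ X.encard :=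
  calc I.encard = M.eRk I := hI.eRk_eq_encard.symm
    _ ≤ M.eRk (M.closure X) := M.eRk_mono hIX
    _ = M.eRk X := M.eRk_closure_eq X
    _ ≤ X.encard := M.eRk_le_encard X

lemma encard_le_add_of_subset_closure_union {M₁ M₂ : Matroid α} {T X₁ X₂ : Set α}
    (hT₁ : M₁.Indep T) (hT₂ : M₂.Indep T) (hT : T ⊆ M₁.closure X₁ ∪ M₂.closure X₂) :
    T.encard ≤ X₁.encard + X₂.encard :=
  calc T.encard = (T ∩ M₁.closure X₁ ∪ T ∩ M₂.closure X₂).encard := by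
        rw [← inter_union_distrib_left, inter_eq_left.2 hT]
    _ ≤ (T ∩ M₁.closure X₁).encard + (T ∩ M₂.closure X₂).encard := encard_union_le _ _
    _ ≤ X₁.encard + X₂.encard := add_le_add
        ((hT₁.subset inter_subset_left).encard_le_of_subset_closure inter_subset_right)
        ((hT₂.subset inter_subset_left).encard_le_of_subset_closure inter_subset_right)

lemma subset_closure_union_of_maximal_common_indep {M₁ M₂ : Matroid α} {S T : Set α}
    (hS₁ : M₁.Indep S) (hS₂ : M₂.Indep S)
    (hmax : ∀ U, M₁.Indep U → M₂.Indep U → S ⊆ U → U = S)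
    (hT₁ : T ⊆ M₁.E) (hT₂ : T ⊆ M₂.E) : T ⊆ M₁.closure S ∪ M₂.closure S := by
  intro x hxT
  by_cases hxS : x ∈ S
  · exact Or.inl (M₁.subset_closure S hS₁.subset_ground hxS)
  by_contra! hx
  have hins₁ : M₁.Indep (insert x S) :=
    (hS₁.insert_indep_iff_of_notMem hxS).2 ⟨hT₁ hxT, fun h ↦ hx (Or.inl h)⟩
  have hins₂ : M₂.Indep (insert x S) :=
    (hS₂.insert_indep_iff_of_notMem hxS).2 ⟨hT₂ hxT, fun h ↦ hx (Or.inr h)⟩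
  exact hxS (hmax _ hins₁ hins₂ (subset_insert x S) ▸ mem_insert x S)

end Matroid

open Matroid

theorem maximal_common_indep_half_general {α : Type*} (M₁ M₂ : Matroid α)
    (S : Set α) (hS₁ : M₁.Indep S) (hS₂ : M₂.Indep S)
    (hmax : ∀ T, M₁.Indep T → M₂.Indep T → S ⊆ T → T = S)
    (r : ℕ) (hr : IsGreatest {n | ∃ T, M₁.Indep T ∧ M₂.Indep T ∧ T.ncard = n} r) :
    r ≤ 2 * S.ncard := by
  obtain ⟨⟨T, hT₁, hT₂, rfl⟩, hbound⟩ := hr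
  -- An infinite `S` would contain common independent sets of every finite size.
  have hSfin : S.Finite := by
    by_contra hSinf
    obtain ⟨U, hUS, -, hU⟩ := Set.Infinite.exists_subset_ncard_eq hSinf (T.ncard + 1)
    have := hbound ⟨U, hS₁.subset hUS, hS₂.subset hUS, hU⟩
    omega
  have hT : T.encard ≤ 2 * S.encard := by
    rw [two_mul]
    exact encard_le_add_of_subset_closure_union hT₁ hT₂
      (subset_closure_union_of_maximal_common_indep hS₁ hS₂ hmax hT₁.subset_ground
        hT₂.subset_ground)
  rw [← hSfin.cast_ncard_eq] at hT
  rw [← (finite_of_encard_le_coe hT).cast_ncard_eq] at hT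
  exact_mod_cast hT

/-- Any maximal common independent set of two matroids on the same ground set
has size at least half the size of a maximum common independent set. -/
theorem maximal_common_indep_half {α : Type*} (M₁ M₂ : Matroid α)
    (hE : M₂.E = M₁.E) (hfin : M₁.E.Finite)
    (S : Set α) (hS₁ : M₁.Indep S) (hS₂ : M₂.Indep S)
    (hmax : ∀ T, M₁.Indep T → M₂.Indep T → S ⊆ T → T = S)
    (r : ℕ) (hr : IsGreatest {n | ∃ T, M₁.Indep T ∧ M₂.Indep T ∧ T.ncard = n} r) :
    r ≤ 2 * S.ncard :=
  maximal_common_indep_half_general M₁ M₂ S hS₁ hS₂ hmax r hr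
end

section
/- If S is a common independent set of two matroids that is not of maximum size, then there exist elements and exchanges forming an augmenting sequence; concretely, there exists a sequence s, v1, v2, ..., v_{ℓ−1}, t in the exchange graph G(S) forming an (s,t)-path of length at most 2|S|/(r−|S|) + 2, where r is the maximum size of a common independent set. -/
/-!
Fix a common independent set `T` of maximum size `r` and put `k = r - |S|`. Extend `S` inside
`S ∪ T` to `Bᵢ` independent in `Mᵢ` with `|Bᵢ| = |T|`. By Hall's theorem there are bijections
`σᵢ : S \ T → T \ Bᵢ` with `Bᵢ - u + σᵢ u` independent in `Mᵢ`, which give the edges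
`u → σ₁ u` and `σ₂ u → u` of `G(S)`. Following `y ↦ σ₁ (σ₂⁻¹ y)` from each of the `k` sources
`a ∈ B₁ \ S` (which have edges `s → a`) until leaving `T \ B₂` gives `k` disjoint paths, each
ending in `B₂ \ S` (edge to `t`). They share the at most `|S|` elements of `S \ T`, so one of
them uses at most `|S| / k` of them and has length at most `2|S| / k + 2`.
-/

open Set

variable {α : Type*}

/-- Vertices of the exchange graph: `Sum.inl v` is an element of the ground set,
`Sum.inr false` is the source `s`, `Sum.inr true` is the sink `t`. -/
abbrev ExV (α : Type*) := α ⊕ Bool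

/-- Adjacency in the exchange graph `G(S)` of the common independent set `S`. -/
def exAdj (M₁ M₂ : Matroid α) (S : Set α) : ExV α → ExV α → Prop
  | Sum.inl u, Sum.inl v =>
      (u ∈ S ∧ v ∉ S ∧ M₁.Indep (insert v (S \ {u}))) ∨
      (u ∉ S ∧ v ∈ S ∧ M₂.Indep (insert u (S \ {v})))
  | Sum.inr false, Sum.inl v => v ∉ S ∧ M₁.Indep (insert v S)
  | Sum.inl v, Sum.inr true => v ∉ S ∧ M₂.Indep (insert v S)
  | _, _ => False

/-- `l` is an `(s,t)`-path (list of vertices) in the exchange graph `G(S)`.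
Its length (number of edges) is `l.length - 1`. -/
def IsSTPath (M₁ M₂ : Matroid α) (S : Set α) (l : List (ExV α)) : Prop :=
  l.Chain' (exAdj M₁ M₂ S) ∧ l.head? = some (Sum.inr false) ∧
    l.getLast? = some (Sum.inr true)

/-- `l` is a path from `s` to the element `v` in the exchange graph `G(S)`. -/
def IsSPathTo (M₁ M₂ : Matroid α) (S : Set α) (v : α) (l : List (ExV α)) : Prop :=
  l.Chain' (exAdj M₁ M₂ S) ∧ l.head? = some (Sum.inr false) ∧
    l.getLast? = some (Sum.inl v)

/-- `v` is at distance exactly `i` from `s` in the exchange graph `G(S)`;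
i.e. `v ∈ D_i`. -/
def InLayer (M₁ M₂ : Matroid α) (S : Set α) (i : ℕ) (v : α) : Prop :=
  (∃ l, IsSPathTo M₁ M₂ S v l ∧ l.length = i + 1) ∧
    ∀ l, IsSPathTo M₁ M₂ S v l → i + 1 ≤ l.length

/-- Shortest `(s,t)`-paths in `G(S)` have length exactly `4`. -/
def ShortestAugLenFour (M₁ M₂ : Matroid α) (S : Set α) : Prop :=
  (∃ l, IsSTPath M₁ M₂ S l ∧ l.length = 5) ∧
    ∀ l, IsSTPath M₁ M₂ S l → 5 ≤ l.length

/-- `(B₁, A₁, B₂)` is an augmenting set in `G(S)`. -/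
def IsAugSet (M₁ M₂ : Matroid α) (S B₁ A₁ B₂ : Set α) : Prop :=
  (∀ v ∈ B₁, InLayer M₁ M₂ S 1 v) ∧ (∀ v ∈ A₁, InLayer M₁ M₂ S 2 v) ∧
  (∀ v ∈ B₂, InLayer M₁ M₂ S 3 v) ∧
  B₁.ncard = A₁.ncard ∧ A₁.ncard = B₂.ncard ∧
  M₁.Indep (S ∪ B₁) ∧ M₂.Indep ((S ∪ B₁) \ A₁) ∧
  M₁.Indep ((S \ A₁) ∪ B₂) ∧ M₂.Indep (S ∪ B₂)

theorem Set.sdiff_eq_sdiff_of_subset_of_subset_union {s t u : Set α} (hst : s ⊆ t)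
    (ht : t ⊆ s ∪ u) : t \ u = s \ u :=
  subset_antisymm (fun _ hx ↦ ⟨(ht hx.1).resolve_right hx.2, hx.2⟩) (sdiff_subset_sdiff_left hst)

namespace Matroid

variable {M : Matroid α} {A B S T : Set α} {y : α}

theorem Indep.exists_mem_insert_sdiff_singleton_indep (hB : M.Indep B) (hA : A.Nonempty)
    (hyB : y ∉ B) (hy : M.Indep (insert y (B \ A))) :
    ∃ u ∈ A, M.Indep (insert y (B \ {u})) := by
  by_cases hyB' : M.Indep (insert y B)
  · obtain ⟨u, hu⟩ := hA
    exact ⟨u, hu, hyB'.subset (insert_subset_insert sdiff_subset)⟩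
  have hycl : y ∈ M.closure B := by
    by_contra hycl
    exact hyB' ((hB.insert_indep_iff_of_notMem hyB).2 ⟨hy.subset_ground (mem_insert _ _), hycl⟩)
  -- some element of the fundamental circuit of `y` lies in `A`; removing it restores independence
  have hC := hB.fundCircuit_isCircuit hycl hyB
  obtain ⟨u, huC, huA⟩ := not_subset.1 fun h ↦ hC.not_indep (hy.subset h)
  have huy : u ≠ y := fun h ↦ huA (h ▸ mem_insert _ _)
  have huB : u ∈ B := by
    simpa [huy] using M.fundCircuit_subset_insert y B huC
  refine ⟨u, by_contra fun h ↦ huA (mem_insert_of_mem _ ⟨huB, h⟩), ?_⟩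
  rw [insert_sdiff_singleton_comm huy.symm]
  exact (hB.mem_fundCircuit_iff hycl hyB).1 huC

theorem Indep.encard_le_encard_exchangeable (hB : M.Indep B) (hT : M.Indep T)
    (hBfin : B.Finite) (hcard : B.encard = T.encard) (hA : A ⊆ B \ T) :
    A.encard ≤ {y ∈ T \ B | ∃ u ∈ A, M.Indep (insert y (B \ {u}))}.encard := by
  obtain rfl | hAne := A.eq_empty_or_nonempty
  · simp
  set N := {y ∈ T \ B | ∃ u ∈ A, M.Indep (insert y (B \ {u}))}
  have hTcl : T ⊆ M.closure ((B \ A) ∪ N) := by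
    intro y hyT
    have hyE := hT.subset_ground hyT
    by_cases hyB : y ∈ B
    · exact M.mem_closure_of_mem' (Or.inl ⟨hyB, fun hyA ↦ (hA hyA).2 hyT⟩) hyE
    by_cases hycl : y ∈ M.closure (B \ A)
    · exact M.closure_subset_closure subset_union_left hycl
    have hind : M.Indep (insert y (B \ A)) :=
      ((hB.subset sdiff_subset).insert_indep_iff_of_notMem fun h ↦ hyB h.1).2 ⟨hyE, hycl⟩
    obtain ⟨u, huA, hu⟩ := hB.exists_mem_insert_sdiff_singleton_indep hAne hyB hind
    exact M.mem_closure_of_mem' (Or.inr ⟨⟨hyT, hyB⟩, u, huA, hu⟩) hyE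
  have hle : T.encard ≤ (B \ A).encard + N.encard := calc
    T.encard ≤ M.eRk (M.closure ((B \ A) ∪ N)) := hT.encard_le_eRk_of_subset hTcl
    _ = M.eRk ((B \ A) ∪ N) := M.eRk_closure_eq _
    _ ≤ ((B \ A) ∪ N).encard := M.eRk_le_encard _
    _ ≤ (B \ A).encard + N.encard := encard_union_le _ _
  rw [← hcard, ← encard_sdiff_add_encard_of_subset (hA.trans sdiff_subset)] at hle
  exact (WithTop.add_le_add_iff_left hBfin.sdiff.encard_lt_top.ne).1 hle

theorem Indep.exists_bijOn_exchange (hB : M.Indep B) (hT : M.Indep T) (hBfin : B.Finite)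
    (hcard : B.encard = T.encard) :
    ∃ σ : α → α, BijOn σ (B \ T) (T \ B) ∧ ∀ u ∈ B \ T, M.Indep (insert (σ u) (B \ {u})) := by
  classical
  have hTfin : T.Finite := hBfin.finite_of_encard_le hcard.ge
  let nbhd (u : ↥(B \ T)) : Finset α :=
    (hTfin.sdiff (t := B)).toFinset.filter fun y ↦ M.Indep (insert y (B \ {u.1}))
  have hHall (s : Finset ↥(B \ T)) : s.card ≤ (s.biUnion nbhd).card := by
    have h := hB.encard_le_encard_exchangeable hT hBfin hcard
      (A := Subtype.val '' (s : Set ↥(B \ T))) (by rintro _ ⟨u, -, rfl⟩; exact u.2)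
    have hN : {y ∈ T \ B | ∃ u ∈ Subtype.val '' (s : Set ↥(B \ T)),
        M.Indep (insert y (B \ {u}))} = ↑(s.biUnion nbhd) := by
      ext y; simp [nbhd]
    rw [Subtype.val_injective.encard_image, hN, encard_coe_eq_coe_finsetCard,
      encard_coe_eq_coe_finsetCard] at h
    exact_mod_cast h
  obtain ⟨f, hfinj, hf⟩ := (Finset.all_card_le_biUnion_card_iff_exists_injective nbhd).1 hHall
  set σ : α → α := fun x ↦ if hx : x ∈ B \ T then f ⟨x, hx⟩ else x
  have hσ : ∀ u (hu : u ∈ B \ T), σ u = f ⟨u, hu⟩ := fun u hu ↦ dif_pos hu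
  have hmaps : MapsTo σ (B \ T) (T \ B) := fun u hu ↦ by
    simpa [hσ u hu, nbhd] using (Finset.mem_filter.1 (hf ⟨u, hu⟩)).1
  have hinj : InjOn σ (B \ T) := fun u hu v hv huv ↦ by
    simpa using hfinj ((hσ u hu).symm.trans (huv.trans (hσ v hv)))
  have himage : σ '' (B \ T) = T \ B := by
    refine hTfin.sdiff.eq_of_subset_of_encard_le' hmaps.image_subset ?_
    rw [hinj.encard_image, (encard_eq_encard_iff_encard_sdiff_eq_encard_sdiff
      (hBfin.subset inter_subset_left)).1 hcard]
  refine ⟨σ, ⟨hmaps, hinj, himage.symm.subset⟩, fun u hu ↦ ?_⟩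
  simpa [hσ u hu] using (Finset.mem_filter.1 (hf ⟨u, hu⟩)).2

theorem Indep.exists_superset_subset_union_encard_eq (hS : M.Indep S) (hT : M.Indep T)
    (hST : S.encard ≤ T.encard) :
    ∃ B, M.Indep B ∧ S ⊆ B ∧ B ⊆ S ∪ T ∧ B.encard = T.encard := by
  obtain ⟨I, hI, hSI⟩ :=
    hS.subset_isBasis_of_subset subset_union_left (union_subset hS.subset_ground hT.subset_ground)
  have hTI : T.encard ≤ I.encard :=
    (hT.encard_le_eRk_of_subset subset_union_right).trans hI.encard_eq_eRk.ge
  obtain ⟨B, hSB, hBI, hB⟩ := exists_superset_subset_encard_eq hSI hST hTI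
  exact ⟨B, hI.indep.subset hBI, hSB, hBI.trans hI.subset, hB⟩

end Matroid

namespace Set.InjOn

variable {g : α → α} {D : Set α}

theorem eq_and_eq_of_iterate_eq (hg : InjOn g D) {a b : α} (ha : a ∉ g '' D)
    (hb : b ∉ g '' D) {i j : ℕ} (hai : ∀ m < i, g^[m] a ∈ D) (hbj : ∀ m < j, g^[m] b ∈ D)
    (h : g^[i] a = g^[j] b) : a = b ∧ i = j := by
  induction i generalizing j with
  | zero =>
    cases j with
    | zero => exact ⟨h, rfl⟩
    | succ j =>
      rw [Function.iterate_succ_apply'] at h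
      exact (ha ⟨_, hbj j j.lt_succ_self, h.symm⟩).elim
  | succ i ih =>
    cases j with
    | zero =>
      rw [Function.iterate_succ_apply'] at h
      exact (hb ⟨_, hai i i.lt_succ_self, h⟩).elim
    | succ j =>
      simp only [Function.iterate_succ_apply'] at h
      obtain ⟨rfl, rfl⟩ := ih (fun m hm ↦ hai m (hm.trans i.lt_succ_self))
        (fun m hm ↦ hbj m (hm.trans j.lt_succ_self))
        (hg (hai i i.lt_succ_self) (hbj j j.lt_succ_self) h)
      exact ⟨rfl, rfl⟩

theorem exists_iterate_notMem (hg : InjOn g D) (hD : D.Finite) {a : α} (ha : a ∉ g '' D) :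
    ∃ n, (∀ m < n, g^[m] a ∈ D) ∧ g^[n] a ∉ D := by
  by_contra! h
  have hmem (n : ℕ) : g^[n] a ∈ D := Nat.strong_induction_on n h
  refine infinite_of_injective_forall_mem (fun i j hij ↦ ?_) hmem hD
  exact (hg.eq_and_eq_of_iterate_eq ha ha (fun m _ ↦ hmem m) (fun m _ ↦ hmem m) hij).2

theorem exists_iterate_run_mul_ncard_le (hg : InjOn g D) (hD : D.Finite) {P : Set α}
    (hP : P.Finite) (hPne : P.Nonempty) (hPD : ∀ a ∈ P, a ∉ g '' D) :
    ∃ a ∈ P, ∃ n, (∀ m < n, g^[m] a ∈ D) ∧ g^[n] a ∉ D ∧ P.ncard * n ≤ D.ncard := by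
  classical
  choose! N hN using fun a (ha : a ∈ P) ↦ hg.exists_iterate_notMem hD (hPD a ha)
  -- the runs of distinct starting points are disjoint, so their lengths add up to at most `|D|`
  have hsum : ∑ a ∈ hP.toFinset, N a ≤ D.ncard := calc
    ∑ a ∈ hP.toFinset, N a = (hP.toFinset.sigma fun a ↦ Finset.range (N a)).card := by
      simp
    _ ≤ hD.toFinset.card := by
      refine Finset.card_le_card_of_injOn (fun x ↦ g^[x.2] x.1) (fun x hx ↦ ?_) ?_
      · simp only [Finset.mem_coe, Finset.mem_sigma, Finite.mem_toFinset, Finset.mem_range] at hx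
        simpa using (hN x.1 hx.1).1 x.2 hx.2
      · rintro ⟨a, i⟩ hx ⟨b, j⟩ hy hxy
        simp only [Finset.mem_coe, Finset.mem_sigma, Finite.mem_toFinset, Finset.mem_range] at hx hy
        obtain ⟨rfl, rfl⟩ := hg.eq_and_eq_of_iterate_eq (hPD a hx.1) (hPD b hy.1)
          (fun m hm ↦ (hN a hx.1).1 m (hm.trans hx.2))
          (fun m hm ↦ (hN b hy.1).1 m (hm.trans hy.2)) hxy
        rfl
    _ = D.ncard := (ncard_eq_toFinset_card D hD).symm
  obtain ⟨a, ha, hmin⟩ := hP.toFinset.exists_min_image N (by simpa using hPne)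
  rw [Finite.mem_toFinset] at ha
  refine ⟨a, ha, N a, (hN a ha).1, (hN a ha).2, ?_⟩
  calc P.ncard * N a = hP.toFinset.card • N a := by rw [ncard_eq_toFinset_card P hP, smul_eq_mul]
    _ ≤ ∑ b ∈ hP.toFinset, N b := Finset.card_nsmul_le_sum _ _ _ hmin
    _ ≤ D.ncard := hsum

end Set.InjOn

section ExchangeGraph

variable {M₁ M₂ : Matroid α} {S B : Set α} {u v : α}

theorem exAdj_source_of_subset (hSB : S ⊆ B) (hB : M₁.Indep B) (hv : v ∈ B \ S) :
    exAdj M₁ M₂ S (.inr false) (.inl v) :=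
  ⟨hv.2, hB.subset (insert_subset hv.1 hSB)⟩

theorem exAdj_sink_of_subset (hSB : S ⊆ B) (hB : M₂.Indep B) (hv : v ∈ B \ S) :
    exAdj M₁ M₂ S (.inl v) (.inr true) :=
  ⟨hv.2, hB.subset (insert_subset hv.1 hSB)⟩

theorem exAdj_of_indep_insert_sdiff₁ (hSB : S ⊆ B) (hu : u ∈ S) (hv : v ∉ S)
    (h : M₁.Indep (insert v (B \ {u}))) : exAdj M₁ M₂ S (.inl u) (.inl v) :=
  .inl ⟨hu, hv, h.subset (insert_subset_insert (sdiff_subset_sdiff_left hSB))⟩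

theorem exAdj_of_indep_insert_sdiff₂ (hSB : S ⊆ B) (hu : u ∈ S) (hv : v ∉ S)
    (h : M₂.Indep (insert v (B \ {u}))) : exAdj M₁ M₂ S (.inl v) (.inl u) :=
  .inr ⟨hv, hu, h.subset (insert_subset_insert (sdiff_subset_sdiff_left hSB))⟩

theorem exists_chain_to_sink_of_iterate {g h : α → α} {D : Set α}
    (hstep : ∀ y ∈ D, exAdj M₁ M₂ S (.inl y) (.inl (h y)) ∧
      exAdj M₁ M₂ S (.inl (h y)) (.inl (g y))) (n : ℕ) (a : α)
    (hrun : ∀ m < n, g^[m] a ∈ D) (hsink : exAdj M₁ M₂ S (.inl (g^[n] a)) (.inr true)) :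
    ∃ l, (Sum.inl a :: l).IsChain (exAdj M₁ M₂ S) ∧
      (Sum.inl a :: l).getLast? = some (.inr true) ∧ l.length = 2 * n + 1 := by
  induction n generalizing a with
  | zero => exact ⟨[.inr true], List.isChain_pair.2 hsink, rfl, rfl⟩
  | succ n ih =>
    obtain ⟨l, hl, hlast, hlen⟩ := ih (g a) (fun m hm ↦ by
      simpa only [← Function.iterate_succ_apply] using hrun (m + 1) (by omega)) hsink
    obtain ⟨had, hag⟩ := hstep a (hrun 0 n.succ_pos)
    refine ⟨.inl (h a) :: .inl (g a) :: l, ?_, by simpa using hlast, by simp [hlen]; omega⟩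
    exact List.IsChain.cons_cons had (List.IsChain.cons_cons hag hl)

theorem exists_isSTPath_of_iterate {g h : α → α} {D : Set α}
    (hstep : ∀ y ∈ D, exAdj M₁ M₂ S (.inl y) (.inl (h y)) ∧
      exAdj M₁ M₂ S (.inl (h y)) (.inl (g y))) {n : ℕ} {a : α}
    (hsource : exAdj M₁ M₂ S (.inr false) (.inl a)) (hrun : ∀ m < n, g^[m] a ∈ D)
    (hsink : exAdj M₁ M₂ S (.inl (g^[n] a)) (.inr true)) :
    ∃ l, IsSTPath M₁ M₂ S l ∧ l.length = 2 * n + 3 := by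
  obtain ⟨l, hl, hlast, hlen⟩ := exists_chain_to_sink_of_iterate hstep n a hrun hsink
  exact ⟨_, ⟨hl.cons_cons hsource, rfl, by rwa [List.getLast?_cons_cons]⟩, by simp [hlen]⟩

theorem exists_isSTPath_of_exchange_bijOn {T B₁ B₂ : Set α} {σ₁ σ₂ : α → α}
    (hTfin : T.Finite) (hB₁ : M₁.Indep B₁) (hSB₁ : S ⊆ B₁) (hB₁T : B₁ ⊆ S ∪ T)
    (hB₂ : M₂.Indep B₂) (hSB₂ : S ⊆ B₂)
    (hσ₁ : MapsTo σ₁ (S \ T) (T \ B₁)) (hσ₁inj : InjOn σ₁ (S \ T))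
    (hex₁ : ∀ u ∈ S \ T, M₁.Indep (insert (σ₁ u) (B₁ \ {u})))
    (hσ₂ : BijOn σ₂ (S \ T) (T \ B₂))
    (hex₂ : ∀ u ∈ S \ T, M₂.Indep (insert (σ₂ u) (B₂ \ {u}))) (hstart : (B₁ \ S).Nonempty) :
    ∃ n, (∃ l, IsSTPath M₁ M₂ S l ∧ l.length = 2 * n + 3) ∧
      (B₁ \ S).ncard * n ≤ (S \ T).ncard := by
  have hB₁S : B₁ \ S ⊆ T := fun x hx ↦ (hB₁T hx.1).resolve_left hx.2
  have : Nonempty α := hstart.to_type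
  set τ := Function.invFunOn σ₂ (S \ T)
  have hinv := hσ₂.invOn_invFunOn
  have hτ : BijOn τ (T \ B₂) (S \ T) := hσ₂.symm hinv.symm
  set g := σ₁ ∘ τ
  have hg : MapsTo g (T \ B₂) (T \ B₁) := hσ₁.comp hτ.mapsTo
  obtain ⟨a, ha, n, hrun, hstop, hcount⟩ :=
    (hσ₁inj.comp hτ.injOn hτ.mapsTo).exists_iterate_run_mul_ncard_le hTfin.sdiff
      (hTfin.subset hB₁S) hstart (fun a ha ⟨y, hy, hya⟩ ↦ (hg hy).2 (hya ▸ ha.1 : (σ₁ ∘ τ) y ∈ B₁))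
  have hstep (y) (hy : y ∈ T \ B₂) : exAdj M₁ M₂ S (.inl y) (.inl (τ y)) ∧
      exAdj M₁ M₂ S (.inl (τ y)) (.inl (g y)) := by
    have hu := hτ.mapsTo hy
    have hyu := hex₂ _ hu
    rw [hinv.2 hy] at hyu
    exact ⟨exAdj_of_indep_insert_sdiff₂ hSB₂ hu.1 (fun hyS ↦ hy.2 (hSB₂ hyS)) hyu,
      exAdj_of_indep_insert_sdiff₁ hSB₁ hu.1 (fun hS ↦ (hσ₁ hu).2 (hSB₁ hS)) (hex₁ _ hu)⟩
  have hend : g^[n] a ∈ B₂ \ S := by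
    have hT : g^[n] a ∈ T \ S := by
      cases n with
      | zero => exact ⟨hB₁S ha, ha.2⟩
      | succ m =>
        rw [Function.iterate_succ_apply']
        obtain ⟨hT, hB₁⟩ := hg (hrun m m.lt_succ_self)
        exact ⟨hT, fun hS ↦ hB₁ (hSB₁ hS)⟩
    exact ⟨by_contra fun h ↦ hstop ⟨hT.1, h⟩, hT.2⟩
  exact ⟨n, exists_isSTPath_of_iterate hstep (exAdj_source_of_subset hSB₁ hB₁ ha) hrun
    (exAdj_sink_of_subset hSB₂ hB₂ hend), hcount.trans_eq hσ₂.ncard_eq.symm⟩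

theorem exists_isSTPath_of_common_indep {T : Set α} (hfin : M₁.E.Finite) (hS₁ : M₁.Indep S)
    (hS₂ : M₂.Indep S) (hT₁ : M₁.Indep T) (hT₂ : M₂.Indep T) (hST : S.ncard < T.ncard) :
    ∃ n, (∃ l, IsSTPath M₁ M₂ S l ∧ l.length = 2 * n + 3) ∧
      (T.ncard - S.ncard) * n ≤ S.ncard := by
  have hTfin : T.Finite := hfin.subset hT₁.subset_ground
  have hSfin : S.Finite := hfin.subset hS₁.subset_ground
  have hSTe : S.encard ≤ T.encard := by
    rw [← hSfin.cast_ncard_eq, ← hTfin.cast_ncard_eq]; exact_mod_cast hST.le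
  obtain ⟨B₁, hB₁, hSB₁, hB₁ST, hB₁T⟩ := hS₁.exists_superset_subset_union_encard_eq hT₁ hSTe
  obtain ⟨B₂, hB₂, hSB₂, hB₂ST, hB₂T⟩ := hS₂.exists_superset_subset_union_encard_eq hT₂ hSTe
  obtain ⟨σ₁, hσ₁, hex₁⟩ :=
    hB₁.exists_bijOn_exchange hT₁ ((hSfin.union hTfin).subset hB₁ST) hB₁T
  obtain ⟨σ₂, hσ₂, hex₂⟩ :=
    hB₂.exists_bijOn_exchange hT₂ ((hSfin.union hTfin).subset hB₂ST) hB₂T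
  rw [sdiff_eq_sdiff_of_subset_of_subset_union hSB₁ hB₁ST] at hσ₁ hex₁
  rw [sdiff_eq_sdiff_of_subset_of_subset_union hSB₂ hB₂ST] at hσ₂ hex₂
  have hB₁n : B₁.ncard = T.ncard := by rw [ncard_def, ncard_def, hB₁T]
  obtain ⟨n, hpath, hn⟩ := exists_isSTPath_of_exchange_bijOn hTfin hB₁ hSB₁ hB₁ST hB₂ hSB₂
    hσ₁.mapsTo hσ₁.injOn hex₁ hσ₂ hex₂ (sdiff_nonempty_of_ncard_lt_ncard (by omega) hSfin)
  refine ⟨n, hpath, ?_⟩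
  calc (T.ncard - S.ncard) * n = (B₁ \ S).ncard * n := by rw [ncard_sdiff hSB₁ hSfin, hB₁n]
    _ ≤ (S \ T).ncard := hn
    _ ≤ S.ncard := ncard_le_ncard sdiff_subset hSfin

end ExchangeGraph

theorem exists_short_augmenting_path_general {α : Type*} (M₁ M₂ : Matroid α)
    (hfin : M₁.E.Finite)
    (S : Set α) (hS₁ : M₁.Indep S) (hS₂ : M₂.Indep S)
    (r : ℕ) (hr : IsGreatest {n | ∃ T, M₁.Indep T ∧ M₂.Indep T ∧ T.ncard = n} r)
    (hlt : S.ncard < r) :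
    ∃ l : List (ExV α), IsSTPath M₁ M₂ S l ∧
      ((l.length : ℚ) - 1 ≤ 2 * S.ncard / (r - S.ncard) + 2) := by
  obtain ⟨⟨T, hT₁, hT₂, rfl⟩, -⟩ := hr
  obtain ⟨n, ⟨l, hl, hlen⟩, hn⟩ := exists_isSTPath_of_common_indep hfin hS₁ hS₂ hT₁ hT₂ hlt
  refine ⟨l, hl, ?_⟩
  have hk : (0 : ℚ) < T.ncard - S.ncard := sub_pos.2 (by exact_mod_cast hlt)
  have hnk : (n : ℚ) ≤ S.ncard / (T.ncard - S.ncard) := by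
    rw [le_div_iff₀ hk, mul_comm, ← Nat.cast_sub hlt.le]
    exact_mod_cast hn
  rw [hlen, mul_div_assoc]
  push_cast
  linarith

/-- Cunningham's lemma: if the common independent set `S` is not maximum, then
the exchange graph `G(S)` contains an `(s,t)`-path of length at most
`2|S|/(r - |S|) + 2`. -/
theorem exists_short_augmenting_path {α : Type*} (M₁ M₂ : Matroid α)
    (hE : M₂.E = M₁.E) (hfin : M₁.E.Finite)
    (S : Set α) (hS₁ : M₁.Indep S) (hS₂ : M₂.Indep S)
    (r : ℕ) (hr : IsGreatest {n | ∃ T, M₁.Indep T ∧ M₂.Indep T ∧ T.ncard = n} r)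
    (hlt : S.ncard < r) :
    ∃ l : List (ExV α), IsSTPath M₁ M₂ S l ∧
      ((l.length : ℚ) - 1 ≤ 2 * S.ncard / (r - S.ncard) + 2) :=
  exists_short_augmenting_path_general M₁ M₂ hfin S hS₁ hS₂ r hr hlt
end

section
/- Let S be a common independent set of two matroids such that every (s,t)-path in the exchange graph G(S) has length at least 6. Then |S| ≥ (2/3)·r, where r is the maximum size of a common independent set. -/
open Set

variable {α : Type*}

/-! If no `(s,t)`-path in `G(S)` has at most `k + 2` edges and `R j` denotes the set of elements
at distance at most `j` from `s`, then every element of `M₁.E ∩ M₂.E` lies in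
`cl₁(S \ R k) ∪ cl₂(S ∩ R (k + 2))`. Indeed, an element `v ∉ S` spanned by `S` in `Mᵢ` is spanned
by the elements `u ∈ S` with `S - u + v` independent (the rest of its fundamental circuit), and
these are exactly its neighbours in `G(S)`; elements of `R (k + 1)` cannot go to `t`, and elements
outside `R (k + 1)` cannot come from `s` or from `R k`. A common independent set `T` therefore has
`|T| ≤ |S \ R k| + |S ∩ R (k + 2)|`, and adding these bounds for `k = 0` and `k = 2` gives
`2|T| ≤ |S| + (|S ∩ R 2| + |S \ R 2|) + |S| = 3|S|`. -/

namespace Matroid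

theorem Indep.mem_closure_setOf_insert_sdiff_singleton_indep {M : Matroid α} {S : Set α} {v : α}
    (hS : M.Indep S) (hv : v ∈ M.E) (hdep : ¬ M.Indep (insert v S)) :
    v ∈ M.closure {u | u ∈ S ∧ M.Indep (insert v (S \ {u}))} := by
  have hvS : v ∉ S := fun h => hdep (by rwa [insert_eq_of_mem h])
  have hvcl : v ∈ M.closure S := by
    by_contra h
    exact hdep (hS.insert_indep_iff.2 (.inl ⟨hv, h⟩))
  have hC := hS.fundCircuit_isCircuit hvcl hvS
  refine M.closure_subset_closure ?_ (hC.mem_closure_sdiff_singleton_of_mem (M.mem_fundCircuit v S))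
  rintro u ⟨huC, huv : u ≠ v⟩
  refine ⟨(M.fundCircuit_subset_insert v S huC).resolve_left huv, ?_⟩
  rw [insert_sdiff_singleton_comm huv.symm]
  exact (hS.mem_fundCircuit_iff hvcl hvS).1 huC

theorem encard_le_eRk_add_eRk_of_subset_closure_union {M₁ M₂ : Matroid α} {T A B : Set α}
    (h₁ : M₁.Indep T) (h₂ : M₂.Indep T) (hT : T ⊆ M₁.closure A ∪ M₂.closure B) :
    T.encard ≤ M₁.eRk A + M₂.eRk B := by
  have hsdiff : T \ M₁.closure A ⊆ M₂.closure B := fun x hx => (hT hx.1).resolve_left hx.2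
  calc T.encard = (T ∩ M₁.closure A).encard + (T \ M₁.closure A).encard := by
        rw [add_comm, encard_sdiff_add_encard_inter]
    _ ≤ M₁.eRk (M₁.closure A) + M₂.eRk (M₂.closure B) :=
        add_le_add ((h₁.subset inter_subset_left).encard_le_eRk_of_subset inter_subset_right)
          ((h₂.subset sdiff_subset).encard_le_eRk_of_subset hsdiff)
    _ = M₁.eRk A + M₂.eRk B := by rw [eRk_closure_eq, eRk_closure_eq]

end Matroid

section ExchangeGraph

variable {M₁ M₂ : Matroid α} {S T : Set α} {k m : ℕ} {u v : α}

-- `l.length` counts vertices, so these are the elements at distance at most `k` from `s`.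
def reachWithin (M₁ M₂ : Matroid α) (S : Set α) (k : ℕ) : Set α :=
  {v | ∃ l, IsSPathTo M₁ M₂ S v l ∧ l.length ≤ k + 1}

theorem IsSPathTo.concat {l : List (ExV α)} {b : ExV α} (hl : IsSPathTo M₁ M₂ S v l)
    (hb : exAdj M₁ M₂ S (.inl v) b) :
    (l ++ [b]).IsChain (exAdj M₁ M₂ S) ∧ (l ++ [b]).head? = some (.inr false) ∧
      (l ++ [b]).getLast? = some b := by
  obtain ⟨hc, hh, ht⟩ := hl
  refine ⟨hc.append (List.isChain_singleton b) ?_, ?_, by simp⟩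
  · intro x hx y hy
    simp_all
  · cases l <;> simp_all

theorem reachWithin_mono (h : k ≤ m) : reachWithin M₁ M₂ S k ⊆ reachWithin M₁ M₂ S m :=
  fun _ ⟨l, hl, hlen⟩ => ⟨l, hl, by omega⟩

theorem mem_reachWithin_one (hvS : v ∉ S) (hv : M₁.Indep (insert v S)) :
    v ∈ reachWithin M₁ M₂ S 1 :=
  ⟨[.inr false, .inl v], ⟨List.isChain_pair.2 ⟨hvS, hv⟩, rfl, rfl⟩, le_rfl⟩

theorem mem_reachWithin_succ (hv : v ∈ reachWithin M₁ M₂ S k)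
    (hvu : exAdj M₁ M₂ S (.inl v) (.inl u)) : u ∈ reachWithin M₁ M₂ S (k + 1) := by
  obtain ⟨l, hl, hlen⟩ := hv
  refine ⟨l ++ [.inl u], ?_, by simp; omega⟩
  exact hl.concat hvu

theorem not_indep_insert_of_mem_reachWithin
    (hlong : ∀ l, IsSTPath M₁ M₂ S l → k + 3 ≤ l.length) (hv : v ∈ reachWithin M₁ M₂ S k)
    (hvS : v ∉ S) : ¬ M₂.Indep (insert v S) := by
  intro hvt
  obtain ⟨l, hl, hlen⟩ := hv
  have := hlong _ (hl.concat (b := .inr true) ⟨hvS, hvt⟩)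
  simp only [List.length_append, List.length_singleton] at this
  omega

theorem inter_ground_subset_closure_union_closure (hS₁ : M₁.Indep S) (hS₂ : M₂.Indep S)
    (hlong : ∀ l, IsSTPath M₁ M₂ S l → k + 4 ≤ l.length) :
    M₁.E ∩ M₂.E ⊆ M₁.closure (S \ reachWithin M₁ M₂ S k) ∪
      M₂.closure (S ∩ reachWithin M₁ M₂ S (k + 2)) := by
  rintro x ⟨hx₁, hx₂⟩
  by_cases hxS : x ∈ S
  · by_cases hxR : x ∈ reachWithin M₁ M₂ S (k + 2)
    · exact .inr (M₂.subset_closure _ (inter_subset_left.trans hS₂.subset_ground) ⟨hxS, hxR⟩)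
    · exact .inl (M₁.subset_closure _ (sdiff_subset.trans hS₁.subset_ground)
        ⟨hxS, fun h => hxR (reachWithin_mono (by omega) h)⟩)
  by_cases hxR : x ∈ reachWithin M₁ M₂ S (k + 1)
  · right
    refine M₂.closure_subset_closure ?_ (hS₂.mem_closure_setOf_insert_sdiff_singleton_indep hx₂
      (not_indep_insert_of_mem_reachWithin hlong hxR hxS))
    rintro u ⟨huS, hu⟩
    exact ⟨huS, mem_reachWithin_succ hxR (.inr ⟨hxS, huS, hu⟩)⟩
  · left
    have hdep : ¬ M₁.Indep (insert x S) := fun h =>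
      hxR (reachWithin_mono (by omega) (mem_reachWithin_one hxS h))
    refine M₁.closure_subset_closure ?_
      (hS₁.mem_closure_setOf_insert_sdiff_singleton_indep hx₁ hdep)
    rintro u ⟨huS, hu⟩
    exact ⟨huS, fun huR => hxR (mem_reachWithin_succ huR (.inl ⟨huS, hxS, hu⟩))⟩

theorem encard_le_encard_sdiff_reachWithin_add_encard_inter (hT₁ : M₁.Indep T)
    (hT₂ : M₂.Indep T) (hS₁ : M₁.Indep S) (hS₂ : M₂.Indep S)
    (hlong : ∀ l, IsSTPath M₁ M₂ S l → k + 4 ≤ l.length) :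
    T.encard ≤ (S \ reachWithin M₁ M₂ S k).encard +
      (S ∩ reachWithin M₁ M₂ S (k + 2)).encard :=
  (Matroid.encard_le_eRk_add_eRk_of_subset_closure_union hT₁ hT₂ fun _ hx =>
    inter_ground_subset_closure_union_closure hS₁ hS₂ hlong
      ⟨hT₁.subset_ground hx, hT₂.subset_ground hx⟩).trans
    (add_le_add (M₁.eRk_le_encard _) (M₂.eRk_le_encard _))

theorem two_mul_encard_le_three_mul_encard (hT₁ : M₁.Indep T) (hT₂ : M₂.Indep T)
    (hS₁ : M₁.Indep S) (hS₂ : M₂.Indep S) (hlong : ∀ l, IsSTPath M₁ M₂ S l → 6 ≤ l.length) :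
    2 * T.encard ≤ 3 * S.encard := by
  have h₀ := encard_le_encard_sdiff_reachWithin_add_encard_inter (k := 0) hT₁ hT₂ hS₁ hS₂
    fun l hl => (hlong l hl).trans' (by norm_num)
  have h₂ := encard_le_encard_sdiff_reachWithin_add_encard_inter (k := 2) hT₁ hT₂ hS₁ hS₂ hlong
  set R := reachWithin M₁ M₂ S 2
  calc 2 * T.encard = T.encard + T.encard := two_mul _
    _ ≤ (S.encard + (S ∩ R).encard) + ((S \ R).encard + S.encard) :=
        add_le_add (h₀.trans (add_le_add_left (encard_le_encard sdiff_subset) _))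
          (h₂.trans (add_le_add_right (encard_le_encard inter_subset_left) _))
    _ = S.encard + ((S \ R).encard + (S ∩ R).encard) + S.encard := by ring
    _ = 3 * S.encard := by rw [encard_sdiff_add_encard_inter]; ring

end ExchangeGraph

theorem two_thirds_of_no_short_path_general {α : Type*} (M₁ M₂ : Matroid α)
    (hfin : M₁.E.Finite)
    (S : Set α) (hS₁ : M₁.Indep S) (hS₂ : M₂.Indep S)
    (r : ℕ) (hr : IsGreatest {n | ∃ T, M₁.Indep T ∧ M₂.Indep T ∧ T.ncard = n} r)
    (hlong : ∀ l : List (ExV α), IsSTPath M₁ M₂ S l → 7 ≤ l.length) :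
    (2 / 3 : ℚ) * r ≤ S.ncard := by
  obtain ⟨⟨T, hT₁, hT₂, rfl⟩, -⟩ := hr
  have hbound := two_mul_encard_le_three_mul_encard hT₁ hT₂ hS₁ hS₂
    fun l hl => (hlong l hl).trans' (by norm_num)
  rw [← (hfin.subset hT₁.subset_ground).cast_ncard_eq,
    ← (hfin.subset hS₁.subset_ground).cast_ncard_eq] at hbound
  have hnat : 2 * T.ncard ≤ 3 * S.ncard := by exact_mod_cast hbound
  rw [div_mul_eq_mul_div, div_le_iff₀ (by norm_num)]
  exact_mod_cast (by omega : 2 * T.ncard ≤ S.ncard * 3)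

/-- If every `(s,t)`-path in the exchange graph `G(S)` has length at least `6`,
then `S` is a `2/3`-approximate solution of matroid intersection. -/
theorem two_thirds_of_no_short_path {α : Type*} (M₁ M₂ : Matroid α)
    (hE : M₂.E = M₁.E) (hfin : M₁.E.Finite)
    (S : Set α) (hS₁ : M₁.Indep S) (hS₂ : M₂.Indep S)
    (r : ℕ) (hr : IsGreatest {n | ∃ T, M₁.Indep T ∧ M₂.Indep T ∧ T.ncard = n} r)
    (hlong : ∀ l : List (ExV α), IsSTPath M₁ M₂ S l → 7 ≤ l.length) :
    (2 / 3 : ℚ) * r ≤ S.ncard :=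
  two_thirds_of_no_short_path_general M₁ M₂ hfin S hS₁ hS₂ r hr hlong
end

section
/- If s, v1, v2, ..., v_{ℓ−1}, t is a shortest (s,t)-path in the exchange graph G(S) of a common independent set S, then the set S' = S + v1 − v2 + v3 − ... − v_{ℓ−2} + v_{ℓ−1} (alternately adding odd-indexed and removing even-indexed vertices) is a common independent set of size |S| + 1. -/
open Set

variable {α : Type*}

/-!
Along a shortest `(s,t)`-path the vertices alternate between `V \ S` and `S`, and the path has
no shortcuts. For `M₁`, the path edges `vᵢ → vᵢ₊₁` with `vᵢ ∈ S` are exchanges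
`S - vᵢ + vᵢ₊₁ ∈ I₁`, and the missing shortcuts make this system of exchanges triangular; a
triangular system of exchanges can be performed simultaneously (induction on the last pair, via
the fundamental circuit of its entering element). The first vertex `v₁` is added last: it lies
outside the closure of `S`, which contains every other entering vertex. The `M₂` case is the
`M₁` case for the reversed path in the exchange graph with `M₁` and `M₂` swapped.
-/

namespace List

variable {β : Type*} {R : β → β → Prop} {l : List β}

theorem IsChain.le_succ_of_rel_getElem (hl : l.IsChain R)
    (hmin : ∀ l' : List β, l'.IsChain R → l'.head? = l.head? → l'.getLast? = l.getLast? →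
      l.length ≤ l'.length)
    {i j : ℕ} (hij : i < j) (hj : j < l.length) (h : R l[i] l[j]) : j ≤ i + 1 := by
  have hbridge : ∀ a ∈ (l.take (i + 1)).getLast?, ∀ b ∈ (l.drop j).head?, R a b := by
    simp_all [getLast?_take, getElem?_eq_getElem (show i < l.length by omega)]
  have hhead : (l.take (i + 1) ++ l.drop j).head? = l.head? := by
    cases l <;> simp_all
  have hlast : (l.take (i + 1) ++ l.drop j).getLast? = l.getLast? := by
    have : l ≠ [] := ne_nil_of_length_pos (by omega)
    simp [getLast?_append, getLast?_drop, show ¬ l.length ≤ j by omega,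
      getLast?_eq_some_getLast this]
  have := hmin _ ((hl.take _).append (hl.drop _) hbridge) hhead hlast
  simp only [length_append, length_take, length_drop] at this
  omega

def elemsAtParity (vs : List α) (r : ℕ) : Set α := {v | ∃ i, vs[i]? = some v ∧ i % 2 = r}

def oddIndices (vs : List α) : Finset ℕ := (Finset.range vs.length).filter (· % 2 = 1)

variable {vs : List α}

theorem mem_oddIndices {i : ℕ} : i ∈ vs.oddIndices ↔ i < vs.length ∧ i % 2 = 1 := by
  simp [oddIndices]

theorem finite_elemsAtParity (r : ℕ) : (vs.elemsAtParity r).Finite :=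
  vs.finite_toSet.subset fun _ ⟨_, h, _⟩ ↦ mem_of_getElem? h

theorem elemsAtParity_one_eq_image (d : α) :
    vs.elemsAtParity 1 = (vs.getD · d) '' vs.oddIndices := by
  ext w
  simp only [elemsAtParity, getElem?_eq_some_iff, Finset.mem_coe, mem_oddIndices, Set.mem_ofPred_eq,
    Set.mem_image]
  constructor
  · rintro ⟨i, ⟨hi, rfl⟩, hr⟩
    exact ⟨i, ⟨hi, hr⟩, getD_eq_getElem _ _ hi⟩
  · rintro ⟨i, ⟨hi, hr⟩, rfl⟩
    exact ⟨i, ⟨hi, (getD_eq_getElem _ _ hi).symm⟩, hr⟩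

theorem elemsAtParity_zero_eq_insert_image (hodd : vs.length % 2 = 1) (d : α) :
    vs.elemsAtParity 0 = insert (vs.getD 0 d) ((fun i ↦ vs.getD (i + 1) d) '' vs.oddIndices) := by
  ext w
  simp only [elemsAtParity, getElem?_eq_some_iff, Finset.mem_coe, mem_oddIndices, Set.mem_ofPred_eq,
    Set.mem_image, Set.mem_insert_iff]
  constructor
  · rintro ⟨_ | i, ⟨hi, rfl⟩, hr⟩
    · exact .inl (getD_eq_getElem _ _ hi).symm
    · exact .inr ⟨i, ⟨by omega, by omega⟩, getD_eq_getElem _ _ hi⟩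
  · rintro (rfl | ⟨i, ⟨hi, hr⟩, rfl⟩)
    · exact ⟨0, ⟨by omega, (getD_eq_getElem _ _ _).symm⟩, rfl⟩
    · exact ⟨i + 1, ⟨by omega, (getD_eq_getElem _ _ _).symm⟩, by omega⟩

theorem elemsAtParity_reverse (hodd : vs.length % 2 = 1) (r : ℕ) :
    vs.reverse.elemsAtParity r = vs.elemsAtParity r := by
  ext w
  simp only [elemsAtParity, Set.mem_ofPred_eq]
  constructor
  · rintro ⟨i, h, hr⟩
    have hi : i < vs.length := by simpa using (getElem?_eq_some_iff.1 h).1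
    rw [getElem?_reverse hi] at h
    exact ⟨vs.length - 1 - i, h, by omega⟩
  · rintro ⟨i, h, hr⟩
    have hi : i < vs.length := (getElem?_eq_some_iff.1 h).1
    refine ⟨vs.length - 1 - i, ?_, by omega⟩
    rwa [getElem?_reverse (by omega), show vs.length - 1 - (vs.length - 1 - i) = i by omega]

theorem ncard_elemsAtParity_zero (hnd : vs.Nodup) (hodd : vs.length % 2 = 1) :
    (vs.elemsAtParity 0).ncard = (vs.elemsAtParity 1).ncard + 1 := by
  have hn : 0 < vs.length := by omega
  have hinj {i j : ℕ} (hi : i < vs.length) (hj : j < vs.length)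
      (h : vs.getD i vs[0] = vs.getD j vs[0]) : i = j := by
    rwa [getD_eq_getElem _ _ hi, getD_eq_getElem _ _ hj, hnd.getElem_inj_iff] at h
  rw [elemsAtParity_zero_eq_insert_image hodd vs[0], elemsAtParity_one_eq_image vs[0],
    ncard_insert_of_notMem, InjOn.ncard_image, InjOn.ncard_image]
  · intro i hi j hj h
    simp only [Finset.mem_coe, mem_oddIndices] at hi hj
    exact hinj hi.1 hj.1 h
  · intro i hi j hj h
    simp only [Finset.mem_coe, mem_oddIndices] at hi hj
    have := hinj (by omega) (by omega) h
    omega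
  · rintro ⟨i, hi, h⟩
    simp only [Finset.mem_coe, mem_oddIndices] at hi
    have := hinj (by omega) hn h
    omega

end List

theorem Set.ncard_sdiff_union_add_ncard {S A R : Set α} (hS : S.Finite) (hA : A.Finite)
    (hRS : R ⊆ S) (hAS : Disjoint A S) : ((S \ R) ∪ A).ncard + R.ncard = S.ncard + A.ncard := by
  rw [ncard_union_eq (hAS.symm.mono_left sdiff_subset) hS.sdiff hA, ncard_sdiff hRS (hS.subset hRS)]
  have := ncard_le_ncard hRS hS
  omega

theorem Set.sdiff_insert_union_insert {I X Y : Set α} {a b : α} (hb : b ∉ Y) :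
    (I \ insert b X) ∪ insert a Y = insert a (((I \ X) ∪ Y) \ {b}) := by
  ext c
  by_cases hca : c = a <;> by_cases hcb : c = b <;> simp_all

namespace Matroid

variable {M : Matroid α} {I J : Set α} {e f : α}

theorem Indep.insert_indep_of_subset_closure (hI : M.Indep I) (he : M.Indep (insert e I))
    (heI : e ∉ I) (hJ : M.Indep J) (hJI : J ⊆ M.closure I) : M.Indep (insert e J) := by
  obtain ⟨heE, hecl⟩ := (hI.insert_indep_iff_of_notMem heI).1 he
  exact hJ.insert_indep_iff.2 <|
    .inl ⟨heE, fun h ↦ hecl (M.closure_subset_closure_of_subset_closure hJI h)⟩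

theorem Indep.insert_sdiff_indep_of_fundCircuit_subset (hI : M.Indep I) (hJ : M.Indep J)
    (heI : e ∈ M.closure I) (heI' : e ∉ I) (heJ : e ∉ J) (hCJ : M.fundCircuit e I ⊆ insert e J)
    (hfe : f ≠ e) (hf : M.Indep (insert e (I \ {f}))) : M.Indep (insert e (J \ {f})) := by
  have hC := hI.fundCircuit_isCircuit heI heI'
  have heJcl : e ∈ M.closure J := M.closure_subset_closure (sdiff_singleton_subset_iff.2 hCJ)
    (hC.mem_closure_sdiff_singleton_of_mem (M.mem_fundCircuit _ _))
  rw [insert_sdiff_singleton_comm hfe.symm] at hf ⊢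
  rw [← hJ.mem_fundCircuit_iff heJcl heJ, ← hC.eq_fundCircuit_of_subset hJ hCJ]
  exact (hI.mem_fundCircuit_iff heI heI').2 hf

theorem Indep.sdiff_image_union_image {ι : Type*} [LinearOrder ι] (hI : M.Indep I)
    (s : Finset ι) {x y : ι → α} (hx : ∀ i ∈ s, x i ∈ I) (hy : ∀ i ∈ s, y i ∉ I)
    (hxy : ∀ i ∈ s, M.Indep (insert (y i) (I \ {x i})))
    (htri : ∀ i ∈ s, ∀ j ∈ s, i < j → ¬ M.Indep (insert (y j) (I \ {x i}))) :
    M.Indep ((I \ x '' s) ∪ y '' s) := by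
  induction s using Finset.induction_on_max with
  | empty => simpa using hI
  | insert t s hlt ih =>
    have hs {i} (hi : i ∈ s) : i ∈ insert t s := Finset.mem_insert_of_mem hi
    have ht : t ∈ insert t s := Finset.mem_insert_self t s
    have hyx {i j} (hi : i ∈ insert t s) (hj : j ∈ insert t s) : y j ≠ x i :=
      fun h ↦ hy j hj (h ▸ hx i hi)
    set J := (I \ x '' s) ∪ y '' s
    have hJ : M.Indep J := ih (fun i hi ↦ hx i (hs hi)) (fun i hi ↦ hy i (hs hi))
      (fun i hi ↦ hxy i (hs hi)) fun i hi j hj ↦ htri i (hs hi) j (hs hj)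
    have hxt : x t ∉ y '' s := fun ⟨i, hi, h⟩ ↦ hyx ht (hs hi) h
    rw [Finset.coe_insert, image_insert_eq, image_insert_eq, sdiff_insert_union_insert hxt]
    obtain rfl | ⟨i, hi⟩ := s.eq_empty_or_nonempty
    · simpa [J] using hxy t ht
    by_cases hytJ : y t ∈ J
    · exact hJ.subset (insert_subset hytJ sdiff_subset)
    -- `y t` depends on `I - x i` for each `i < t`: so it is spanned by `I`, and its fundamental
    -- circuit in `I` avoids all `x i` with `i < t`, hence lies in `insert (y t) J`.
    have hytI : y t ∈ M.closure I := by
      refine M.closure_subset_closure sdiff_subset ((hI.sdiff {x i}).mem_closure_iff'.2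
        ⟨(hxy t ht).subset_ground (mem_insert _ _), fun h ↦ ?_⟩)
      exact absurd h (htri i (hs hi) t ht (hlt i hi))
    have hCJ : M.fundCircuit (y t) I ⊆ insert (y t) J := by
      intro c hc
      obtain rfl | hcI := M.fundCircuit_subset_insert _ _ hc
      · exact mem_insert _ _
      refine .inr (.inl ⟨hcI, ?_⟩)
      rintro ⟨j, hj, rfl⟩
      rw [hI.mem_fundCircuit_iff hytI (hy t ht), ← insert_sdiff_singleton_comm (hyx (hs hj) ht)]
        at hc
      exact htri j (hs hj) t ht (hlt j hj) hc
    exact hI.insert_sdiff_indep_of_fundCircuit_subset hJ hytI (hy t ht) hytJ hCJ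
      (hyx ht ht).symm (hxy t ht)

end Matroid

def stPath (vs : List α) : List (ExV α) := Sum.inr false :: (vs.map Sum.inl ++ [Sum.inr true])

def ExV.swapEnds : ExV α → ExV α := Sum.map id not

section ExchangeGraph

variable {M₁ M₂ : Matroid α} {S : Set α} {vs : List α}

@[simp] theorem stPath_length : (stPath vs).length = vs.length + 2 := by simp [stPath]

@[simp] theorem stPath_getElem_zero : (stPath vs)[0] = Sum.inr false := rfl

@[simp] theorem stPath_getElem_succ {i : ℕ} (hi : i < vs.length) :
    (stPath vs)[i + 1]'(by simp; omega) = Sum.inl vs[i] := by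
  simp [stPath, List.getElem_append_left (show i < (vs.map Sum.inl).length by simpa)]

theorem stPath_getElem_of_eq_length_succ {i : ℕ} (hi : i = vs.length + 1) :
    (stPath vs)[i]'(by simp [hi]) = Sum.inr true := by
  subst hi; simp [stPath]

theorem stPath_reverse : (stPath vs).reverse.map ExV.swapEnds = stPath vs.reverse := by
  simp [stPath, ExV.swapEnds, List.map_reverse]

theorem exAdj_swapEnds {a b : ExV α} :
    exAdj M₂ M₁ S (ExV.swapEnds a) (ExV.swapEnds b) ↔ exAdj M₁ M₂ S b a := by
  rcases a with u | _ | _ <;> rcases b with w | _ | _ <;> simp [exAdj, ExV.swapEnds]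
  tauto

theorem IsSTPath.reverse_swapEnds {l : List (ExV α)} (h : IsSTPath M₁ M₂ S l) :
    IsSTPath M₂ M₁ S (l.reverse.map ExV.swapEnds) := by
  obtain ⟨hc, hh, hl⟩ := h
  refine ⟨?_, ?_, ?_⟩
  · change List.IsChain _ _
    rw [List.isChain_map, List.isChain_reverse]
    simp only [exAdj_swapEnds]
    exact hc
  · simp [hl, ExV.swapEnds]
  · simp [List.getLast?_reverse, hh, ExV.swapEnds]

theorem IsSTPath.exAdj_getElem {l : List (ExV α)} (h : IsSTPath M₁ M₂ S l) {i : ℕ}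
    (hi : i + 1 < l.length) : exAdj M₁ M₂ S l[i] l[i + 1] :=
  List.isChain_iff_getElem.1 h.1 i hi

theorem exAdj_inl_inl_of_mem {u w : α} (hu : u ∈ S) :
    exAdj M₁ M₂ S (.inl u) (.inl w) ↔ w ∉ S ∧ M₁.Indep (insert w (S \ {u})) := by
  simp [exAdj, hu]

theorem mem_iff_notMem_of_exAdj {u w : α} (h : exAdj M₁ M₂ S (.inl u) (.inl w)) :
    u ∈ S ↔ w ∉ S := by
  rcases h with ⟨hu, hw, -⟩ | ⟨hu, hw, -⟩ <;> tauto

namespace IsSTPath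

variable (hpath : IsSTPath M₁ M₂ S (stPath vs))
include hpath

theorem getElem_mem_iff {i : ℕ} (hi : i < vs.length) : vs[i] ∈ S ↔ i % 2 = 1 := by
  induction i with
  | zero =>
    have := hpath.exAdj_getElem (i := 0) (by simp)
    rw [stPath_getElem_zero, stPath_getElem_succ hi] at this
    exact iff_of_false this.1 (by omega)
  | succ i ih =>
    have := hpath.exAdj_getElem (i := i + 1) (by simp; omega)
    rw [stPath_getElem_succ (by omega), stPath_getElem_succ hi] at this
    rw [← not_iff_not, ← mem_iff_notMem_of_exAdj this, ih (by omega)]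
    omega

theorem length_odd : vs.length % 2 = 1 := by
  obtain ⟨m, hm⟩ : ∃ m, vs.length = m + 1 := by
    refine Nat.exists_eq_add_one.2 (Nat.pos_of_ne_zero fun h ↦ ?_)
    simpa [List.length_eq_zero_iff.1 h, stPath, exAdj] using hpath.exAdj_getElem (i := 0) (by simp)
  have := hpath.exAdj_getElem (i := m + 1) (by simp [hm])
  rw [stPath_getElem_succ (by omega), stPath_getElem_of_eq_length_succ (by omega)] at this
  have := (hpath.getElem_mem_iff (i := m) (by omega)).not.1 this.1
  omega

theorem indep_insert_getElem_zero (hn : 0 < vs.length) :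
    vs[0] ∉ S ∧ M₁.Indep (insert vs[0] S) := by
  have := hpath.exAdj_getElem (i := 0) (by simp)
  rwa [stPath_getElem_zero, stPath_getElem_succ hn] at this

theorem indep_insert_getElem_succ {m : ℕ} (hm : m + 1 < vs.length) (hmodd : m % 2 = 1) :
    M₁.Indep (insert vs[m + 1] (S \ {vs[m]})) := by
  have := hpath.exAdj_getElem (i := m + 1) (by simp; omega)
  rw [stPath_getElem_succ (by omega), stPath_getElem_succ hm,
    exAdj_inl_inl_of_mem ((hpath.getElem_mem_iff _).2 hmodd)] at this
  exact this.2

theorem mem_iff_of_mem_elemsAtParity {r : ℕ} {w : α} (hw : w ∈ vs.elemsAtParity r) :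
    w ∈ S ↔ r = 1 := by
  obtain ⟨i, h, rfl⟩ := hw
  obtain ⟨hi, rfl⟩ := List.getElem?_eq_some_iff.1 h
  exact hpath.getElem_mem_iff hi

theorem union_sdiff_elemsAtParity : (S ∪ vs.elemsAtParity 0) \ vs.elemsAtParity 1 =
    (S \ vs.elemsAtParity 1) ∪ vs.elemsAtParity 0 := by
  refine union_sdiff_distrib.trans (congrArg _ (Disjoint.sdiff_eq_left ?_))
  exact Set.disjoint_left.2 fun w h₀ h₁ ↦ absurd ((hpath.mem_iff_of_mem_elemsAtParity h₁).2 rfl)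
    ((hpath.mem_iff_of_mem_elemsAtParity h₀).not.2 zero_ne_one)

theorem ncard_union_sdiff_elemsAtParity (hS : S.Finite) (hnd : vs.Nodup) :
    ((S ∪ vs.elemsAtParity 0) \ vs.elemsAtParity 1).ncard = S.ncard + 1 := by
  have hsum := Set.ncard_sdiff_union_add_ncard hS (List.finite_elemsAtParity 0)
    (fun w hw ↦ (hpath.mem_iff_of_mem_elemsAtParity hw).2 rfl)
    (Set.disjoint_left.2 fun w hw ↦ (hpath.mem_iff_of_mem_elemsAtParity hw).not.2 zero_ne_one)
  have := List.ncard_elemsAtParity_zero hnd hpath.length_odd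
  rw [hpath.union_sdiff_elemsAtParity]
  omega

variable (hshort : ∀ l : List (ExV α), IsSTPath M₁ M₂ S l → vs.length + 2 ≤ l.length)
include hshort

theorem not_exAdj_getElem {i j : ℕ} (hij : i + 1 < j) (hj : j < vs.length + 2) :
    ¬ exAdj M₁ M₂ S ((stPath vs)[i]'(by simp; omega)) ((stPath vs)[j]'(by simpa)) := by
  intro hadj
  have := hpath.1.le_succ_of_rel_getElem
    (fun l hl hh hl' ↦ by simpa using hshort l ⟨hl, hh.trans hpath.2.1, hl'.trans hpath.2.2⟩)
    (by omega) (by simpa) hadj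
  omega

theorem nodup : vs.Nodup := by
  rw [List.nodup_iff_pairwise_ne, List.pairwise_iff_getElem]
  intro p q hp hq hpq heq
  have := hpath.exAdj_getElem (i := p) (by simp; omega)
  rw [stPath_getElem_succ hp, heq, ← stPath_getElem_succ hq] at this
  exact hpath.not_exAdj_getElem hshort (by omega) (by omega) this

theorem not_indep_insert_getElem {i j : ℕ} (hi : i % 2 = 1) (hj : j % 2 = 0) (hij : i + 1 < j)
    (hjn : j < vs.length) : ¬ M₁.Indep (insert vs[j] (S \ {vs[i]})) := fun h ↦ by
  refine hpath.not_exAdj_getElem hshort (i := i + 1) (j := j + 1) (by omega) (by omega) ?_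
  rw [stPath_getElem_succ (by omega), stPath_getElem_succ hjn,
    exAdj_inl_inl_of_mem ((hpath.getElem_mem_iff _).2 hi)]
  exact ⟨(hpath.getElem_mem_iff _).not.2 (by omega), h⟩

theorem getElem_mem_closure (hS : M₁.Indep S) {j : ℕ} (hj : j % 2 = 0) (hj0 : 0 < j)
    (hjn : j < vs.length) : vs[j] ∈ M₁.closure S := by
  obtain ⟨m, rfl⟩ := Nat.exists_eq_add_one_of_ne_zero hj0.ne'
  refine hS.mem_closure_iff'.2 ⟨(hpath.indep_insert_getElem_succ hjn (by omega)).subset_ground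
    (mem_insert _ _), fun h ↦ (hpath.not_exAdj_getElem hshort (i := 0) (j := m + 2) (by omega)
      (by omega) ?_).elim⟩
  rw [stPath_getElem_zero, stPath_getElem_succ hjn]
  exact ⟨(hpath.getElem_mem_iff _).not.2 (by omega), h⟩

theorem indep₁_augment (hS : M₁.Indep S) :
    M₁.Indep ((S ∪ vs.elemsAtParity 0) \ vs.elemsAtParity 1) := by
  have hodd := hpath.length_odd
  have hn : 0 < vs.length := by omega
  have hv {i : ℕ} (hi : i < vs.length) : vs.getD i vs[0] = vs[i] := List.getD_eq_getElem _ _ hi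
  have hodd' {m : ℕ} (hm : m ∈ vs.oddIndices) : m + 1 < vs.length ∧ m % 2 = 1 := by
    rw [List.mem_oddIndices] at hm; omega
  rw [hpath.union_sdiff_elemsAtParity, List.elemsAtParity_zero_eq_insert_image hodd vs[0],
    List.elemsAtParity_one_eq_image vs[0], union_insert, hv hn]
  obtain ⟨h₀S, h₀⟩ := hpath.indep_insert_getElem_zero hn
  refine hS.insert_indep_of_subset_closure h₀ h₀S (hS.sdiff_image_union_image _ ?_ ?_ ?_ ?_)
    (union_subset (sdiff_subset.trans (M₁.subset_closure S)) (image_subset_iff.2 ?_))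
  · intro m hm
    obtain ⟨hm₁, hm₂⟩ := hodd' hm
    rw [hv (by omega)]
    exact (hpath.getElem_mem_iff _).2 hm₂
  · intro m hm
    obtain ⟨hm₁, hm₂⟩ := hodd' hm
    rw [hv hm₁, hpath.getElem_mem_iff]
    omega
  · intro m hm
    obtain ⟨hm₁, hm₂⟩ := hodd' hm
    rw [hv hm₁, hv (by omega)]
    exact hpath.indep_insert_getElem_succ hm₁ hm₂
  · intro i hi j hj hij
    obtain ⟨hi₁, hi₂⟩ := hodd' hi
    obtain ⟨hj₁, hj₂⟩ := hodd' hj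
    rw [hv hj₁, hv (by omega)]
    exact hpath.not_indep_insert_getElem hshort hi₂ (by omega) (by omega) hj₁
  · intro m hm
    obtain ⟨hm₁, hm₂⟩ := hodd' hm
    rw [mem_preimage, hv hm₁]
    exact hpath.getElem_mem_closure hshort hS (by omega) (by omega) hm₁

theorem indep₂_augment (hS : M₂.Indep S) :
    M₂.Indep ((S ∪ vs.elemsAtParity 0) \ vs.elemsAtParity 1) := by
  have hpath' : IsSTPath M₂ M₁ S (stPath vs.reverse) := stPath_reverse ▸ hpath.reverse_swapEnds
  have hshort' (l : List (ExV α)) (hl : IsSTPath M₂ M₁ S l) : vs.reverse.length + 2 ≤ l.length := by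
    simpa using hshort _ hl.reverse_swapEnds
  simpa only [List.elemsAtParity_reverse hpath.length_odd] using hpath'.indep₁_augment hshort' hS

end IsSTPath

end ExchangeGraph

-- `vs = [v₁, …, v_{ℓ-1}]`, so `vᵢ` is `vs[i - 1]`: the added vertices sit at even positions.
theorem augment_along_shortest_path_general {α : Type*} (M₁ M₂ : Matroid α)
    (hfin : M₁.E.Finite)
    (S : Set α) (hS₁ : M₁.Indep S) (hS₂ : M₂.Indep S)
    (vs : List α)
    (hpath : IsSTPath M₁ M₂ S
      (Sum.inr false :: (vs.map Sum.inl ++ [Sum.inr true])))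
    (hshort : ∀ l : List (ExV α), IsSTPath M₁ M₂ S l → vs.length + 2 ≤ l.length) :
    M₁.Indep ((S ∪ {v | ∃ i, vs[i]? = some v ∧ i % 2 = 0}) \
        {v | ∃ i, vs[i]? = some v ∧ i % 2 = 1}) ∧
    M₂.Indep ((S ∪ {v | ∃ i, vs[i]? = some v ∧ i % 2 = 0}) \
        {v | ∃ i, vs[i]? = some v ∧ i % 2 = 1}) ∧
    ((S ∪ {v | ∃ i, vs[i]? = some v ∧ i % 2 = 0}) \
        {v | ∃ i, vs[i]? = some v ∧ i % 2 = 1}).ncard = S.ncard + 1 :=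
  ⟨hpath.indep₁_augment hshort hS₁, hpath.indep₂_augment hshort hS₂,
    hpath.ncard_union_sdiff_elemsAtParity (hfin.subset hS₁.subset_ground) (hpath.nodup hshort)⟩

/-- Augmenting along a shortest `(s,t)`-path `s, v₁, …, v_{ℓ-1}, t` (adding the
odd-indexed and removing the even-indexed vertices) yields a common independent
set of size `|S| + 1`. Here `vs = [v₁, …, v_{ℓ-1}]`, so `vᵢ` has index `i - 1`
in `vs`. -/
theorem augment_along_shortest_path {α : Type*} (M₁ M₂ : Matroid α)
    (hE : M₂.E = M₁.E) (hfin : M₁.E.Finite)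
    (S : Set α) (hS₁ : M₁.Indep S) (hS₂ : M₂.Indep S)
    (vs : List α)
    (hpath : IsSTPath M₁ M₂ S
      (Sum.inr false :: (vs.map Sum.inl ++ [Sum.inr true])))
    (hshort : ∀ l : List (ExV α), IsSTPath M₁ M₂ S l → vs.length + 2 ≤ l.length) :
    M₁.Indep ((S ∪ {v | ∃ i, vs[i]? = some v ∧ i % 2 = 0}) \
        {v | ∃ i, vs[i]? = some v ∧ i % 2 = 1}) ∧
    M₂.Indep ((S ∪ {v | ∃ i, vs[i]? = some v ∧ i % 2 = 0}) \
        {v | ∃ i, vs[i]? = some v ∧ i % 2 = 1}) ∧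
    ((S ∪ {v | ∃ i, vs[i]? = some v ∧ i % 2 = 0}) \
        {v | ∃ i, vs[i]? = some v ∧ i % 2 = 1}).ncard = S.ncard + 1 :=
  augment_along_shortest_path_general M₁ M₂ hfin S hS₁ hS₂ vs hpath hshort
end

section
/- Let S ∈ I1 ∩ I2 be a common independent set of matroids M1, M2 such that shortest (s,t)-paths in the exchange graph G(S) have length 4, and let Π = (B1, A1, B2) be an augmenting set in G(S). Then S ⊕ Π := (S ∪ B1 ∪ B2) ∖ A1 is a common independent set, and |S ⊕ Π| = |S| + |B1| (equivalently |S| + w where w is the width). -/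
/-!
The layers alternate sides of `G(S)`, so `A₁ ⊆ S` while `B₁` and `B₂` avoid `S` and each other.
As `B₂` lies at distance `3`, there is no edge `s → v` for `v ∈ B₂`, i.e. `B₂ ⊆ cl₁ S`; as no
`(s,t)`-path has length `2`, likewise `B₁ ⊆ cl₂ S`. Hence `(S ∖ A₁) ∪ B₂` is an `M₁`-independent
subset of `cl₁ S` of size `|S|`, so it has the same closure as `S` and can replace `S` in the
`M₁`-independent set `S ∪ B₁`. Symmetrically `(S ∖ A₁) ∪ B₁` replaces `S` in `S ∪ B₂` for `M₂`.
-/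

open Set

variable {α : Type*}

namespace Matroid

variable {M : Matroid α} {S T A B C : Set α}

lemma Indep.closure_eq_of_subset_closure (hS : M.Indep S) (hT : M.Indep T) (hTfin : T.Finite)
    (hTS : T ⊆ M.closure S) (hcard : S.encard ≤ T.encard) : M.closure T = M.closure S :=
  (hT.isBasis_of_eRk_ge hTfin hTS (by
    rwa [eRk_closure_eq, hS.eRk_eq_encard, hT.eRk_eq_encard])).closure_eq_right

lemma Indep.union_indep_of_closure_eq (hT : M.Indep T) (hcl : M.closure S = M.closure T)
    (hSB : M.Indep (S ∪ B)) (hdj : Disjoint S B) : M.Indep (T ∪ B) := by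
  have hB : M.Indep B := hSB.subset subset_union_right
  rw [hT.union_indep_iff_forall_notMem_closure_right hB]
  intro e he
  rw [← closure_union_congr_left hcl]
  exact ((hSB.subset subset_union_left).union_indep_iff_forall_notMem_closure_right hB).1 hSB e
    ⟨he.1, hdj.notMem_of_mem_right he.1⟩

lemma Indep.union_indep_of_subset_closure (hSB : M.Indep (S ∪ B)) (hdj : Disjoint S B)
    (hT : M.Indep T) (hTfin : T.Finite) (hTS : T ⊆ M.closure S) (hcard : S.encard ≤ T.encard) :
    M.Indep (T ∪ B) :=
  hT.union_indep_of_closure_eq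
    ((hSB.subset subset_union_left).closure_eq_of_subset_closure hT hTfin hTS hcard).symm hSB hdj

lemma Indep.sdiff_union_union_indep (hSB : M.Indep (S ∪ B)) (hdj : Disjoint S B)
    (hAC : M.Indep (S \ A ∪ C)) (hSfin : S.Finite) (hCfin : C.Finite) (hAS : A ⊆ S)
    (hSC : Disjoint S C) (hC : C ⊆ M.closure S) (hcard : A.ncard ≤ C.ncard) :
    M.Indep (S \ A ∪ C ∪ B) := by
  have hS : S ⊆ M.closure S := M.subset_closure S (subset_union_left.trans hSB.subset_ground)
  refine hSB.union_indep_of_subset_closure hdj hAC (hSfin.sdiff.union hCfin)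
    (union_subset (sdiff_subset.trans hS) hC) ?_
  rw [encard_union_eq (hSC.mono_left sdiff_subset)]
  calc S.encard = (S \ A).encard + A.encard := (encard_sdiff_add_encard_of_subset hAS).symm
    _ ≤ (S \ A).encard + C.encard := by
      rw [← (hSfin.subset hAS).cast_ncard_eq, ← hCfin.cast_ncard_eq]
      gcongr

end Matroid

lemma List.IsChain.getLast_iff_even {β : Type*} {R : β → β → Prop} {p : β → Prop}
    (hR : ∀ x y, R x y → (p y ↔ ¬ p x)) :
    ∀ {a b : β} {l : List β}, (a :: l).IsChain R → (a :: l).getLast? = some b →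
      (p b ↔ (p a ↔ Even l.length))
  | a, b, [], _, hb => by simp_all
  | a, b, c :: l, hc, hb => by
    rw [isChain_cons_cons] at hc
    have ih := hc.2.getLast_iff_even hR (by simpa using hb)
    rw [hR a c hc.1] at ih
    rw [length_cons, Nat.even_add_one]
    tauto

section ExchangeGraph

variable {M₁ M₂ : Matroid α} {S : Set α} {v : α} {i j : ℕ} {l : List (ExV α)}

/-- `G(S)` is bipartite, between `S ∪ {s, t}` and `V ∖ S`. -/
def ExSide (S : Set α) : ExV α → Prop := Sum.elim (· ∈ S) fun _ => True

lemma exAdj_exSide_iff : ∀ {x y : ExV α}, exAdj M₁ M₂ S x y → (ExSide S y ↔ ¬ ExSide S x)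
  | .inl u, .inl w, h => by rcases h with h | h <;> simp [ExSide, h]
  | .inr false, .inl w, h => by simp [ExSide, h.1]
  | .inl u, .inr true, h => by simp [ExSide, h.1]

lemma IsSPathTo.mem_iff_odd (h : IsSPathTo M₁ M₂ S v l) : v ∈ S ↔ Odd l.length := by
  obtain ⟨hc, hh, hl⟩ := h
  cases l with
  | nil => simp at hh
  | cons a l =>
    obtain rfl : a = .inr false := by simpa using hh
    have := List.IsChain.getLast_iff_even (p := ExSide S) (fun _ _ => exAdj_exSide_iff) hc hl
    simpa [ExSide, Nat.odd_add_one] using this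

lemma InLayer.mem_iff_even (h : InLayer M₁ M₂ S i v) : v ∈ S ↔ Even i := by
  obtain ⟨⟨l, hl, hlen⟩, -⟩ := h
  rw [hl.mem_iff_odd, hlen, Nat.odd_add_one, Nat.not_odd_iff_even]

lemma InLayer.eq (hi : InLayer M₁ M₂ S i v) (hj : InLayer M₁ M₂ S j v) : i = j := by
  obtain ⟨⟨l, hl, hlen⟩, hmin⟩ := hi
  obtain ⟨⟨l', hl', hlen'⟩, hmin'⟩ := hj
  have := hmin l' hl'
  have := hmin' l hl
  omega

lemma InLayer.mem_closure_of_one_lt (h : InLayer M₁ M₂ S i v) (hi : 1 < i) (hS : M₁.Indep S)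
    (hv : v ∉ S) (hvE : v ∈ M₁.E) : v ∈ M₁.closure S := by
  by_contra hcl
  have hind := (hS.notMem_closure_iff_of_notMem hv).1 hcl
  have : i + 1 ≤ 2 := h.2 [.inr false, .inl v] ⟨List.isChain_pair.2 ⟨hv, hind⟩, rfl, rfl⟩
  omega

lemma InLayer.mem_closure_of_forall_three_lt (h : InLayer M₁ M₂ S 1 v)
    (hlen : ∀ l, IsSTPath M₁ M₂ S l → 3 < l.length) (hS : M₂.Indep S) (hvE : v ∈ M₂.E) :
    v ∈ M₂.closure S := by
  have hv : v ∉ S := by simpa using h.mem_iff_even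
  by_contra hcl
  have hind := (hS.notMem_closure_iff_of_notMem hv).1 hcl
  obtain ⟨⟨p, ⟨hc, hh, hl⟩, hp⟩, -⟩ := h
  obtain ⟨a, b, rfl⟩ := List.length_eq_two.1 hp
  obtain rfl : a = .inr false := by simpa using hh
  obtain rfl : b = .inl v := by simpa using hl
  exact lt_irrefl 3 <| hlen [.inr false, .inl v, .inr true]
    ⟨List.isChain_cons_cons.2 ⟨List.isChain_pair.1 hc, List.isChain_pair.2 ⟨hv, hind⟩⟩, rfl, rfl⟩

variable {B₁ A₁ B₂ : Set α}

lemma IsAugSet.subset_disjoint (h : IsAugSet M₁ M₂ S B₁ A₁ B₂) :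
    A₁ ⊆ S ∧ Disjoint S B₁ ∧ Disjoint S B₂ ∧ Disjoint B₁ B₂ := by
  obtain ⟨hL₁, hL₂, hL₃, -⟩ := h
  refine ⟨fun v hv => (hL₂ v hv).mem_iff_even.2 even_two, ?_, ?_, ?_⟩
  · exact disjoint_right.2 fun v hv => (hL₁ v hv).mem_iff_even.not.2 (by decide)
  · exact disjoint_right.2 fun v hv => (hL₃ v hv).mem_iff_even.not.2 (by decide)
  · exact disjoint_left.2 fun v h₁ h₂ => absurd ((hL₁ v h₁).eq (hL₃ v h₂)) (by decide)

lemma IsAugSet.subset_closure (h : IsAugSet M₁ M₂ S B₁ A₁ B₂) (hlen : ShortestAugLenFour M₁ M₂ S) :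
    B₁ ⊆ M₂.closure S ∧ B₂ ⊆ M₁.closure S := by
  obtain ⟨hA₁S, -, hSB₂, -⟩ := h.subset_disjoint
  obtain ⟨hL₁, -, hL₃, -, -, hI₁, hI₂, hI₃, hI₄⟩ := h
  refine ⟨fun v hv => ?_, fun v hv => ?_⟩
  · have hvA₁ : v ∉ A₁ := fun hA => (hL₁ v hv).mem_iff_even.not.2 (by decide) (hA₁S hA)
    exact (hL₁ v hv).mem_closure_of_forall_three_lt
      (fun l hl => (by decide : 3 < 5).trans_le (hlen.2 l hl)) (hI₄.subset subset_union_left)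
      (hI₂.subset_ground ⟨mem_union_right _ hv, hvA₁⟩)
  · exact (hL₃ v hv).mem_closure_of_one_lt (by decide) (hI₁.subset subset_union_left)
      (hSB₂.notMem_of_mem_right hv) (hI₃.subset_ground (mem_union_right _ hv))

end ExchangeGraph

theorem augset_augment_general {α : Type*} (M₁ M₂ : Matroid α)
    (hfin : M₁.E.Finite)
    (S : Set α)
    (hlen : ShortestAugLenFour M₁ M₂ S)
    (B₁ A₁ B₂ : Set α) (haug : IsAugSet M₁ M₂ S B₁ A₁ B₂) :
    M₁.Indep ((S ∪ B₁ ∪ B₂) \ A₁) ∧ M₂.Indep ((S ∪ B₁ ∪ B₂) \ A₁) ∧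
      ((S ∪ B₁ ∪ B₂) \ A₁).ncard = S.ncard + B₁.ncard := by
  obtain ⟨hA₁S, hSB₁, hSB₂, hB₁B₂⟩ := haug.subset_disjoint
  obtain ⟨hB₁cl, hB₂cl⟩ := haug.subset_closure hlen
  obtain ⟨-, -, -, hc₁, hc₂, hI₁, hI₂, hI₃, hI₄⟩ := haug
  have hsplit : ∀ {B}, Disjoint S B → (S ∪ B) \ A₁ = S \ A₁ ∪ B := fun hSB => by
    rw [union_sdiff_distrib, (hSB.mono_left hA₁S).symm.sdiff_eq_left]
  have hX : (S ∪ B₁ ∪ B₂) \ A₁ = S \ A₁ ∪ B₁ ∪ B₂ := by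
    rw [union_assoc, hsplit (disjoint_union_right.2 ⟨hSB₁, hSB₂⟩), union_assoc]
  have hSfin : S.Finite := hfin.subset (subset_union_left.trans hI₁.subset_ground)
  have hB₁fin : B₁.Finite := hfin.subset (subset_union_right.trans hI₁.subset_ground)
  have hB₂fin : B₂.Finite := hfin.subset (subset_union_right.trans hI₃.subset_ground)
  refine ⟨?_, ?_, ?_⟩
  · rw [hX, union_right_comm]
    exact hI₁.sdiff_union_union_indep hSB₁ hI₃ hSfin hB₂fin hA₁S hSB₂ hB₂cl hc₂.le
  · rw [hX]
    exact hI₄.sdiff_union_union_indep hSB₂ (hsplit hSB₁ ▸ hI₂) hSfin hB₁fin hA₁S hSB₁ hB₁cl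
      hc₁.ge
  · rw [hX, ncard_union_eq (disjoint_union_left.2 ⟨hSB₂.mono_left sdiff_subset, hB₁B₂⟩)
      (hSfin.sdiff.union hB₁fin) hB₂fin, ncard_union_eq (hSB₁.mono_left sdiff_subset) hSfin.sdiff
      hB₁fin, ncard_sdiff hA₁S (hSfin.subset hA₁S)]
    have := ncard_le_ncard hA₁S hSfin
    omega

/-- If shortest augmenting paths in `G(S)` have length `4` and
`Π = (B₁, A₁, B₂)` is an augmenting set, then `S ⊕ Π = (S ∪ B₁ ∪ B₂) ∖ A₁` is
a common independent set of size `|S| + |B₁|`. -/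
theorem augset_augment {α : Type*} (M₁ M₂ : Matroid α)
    (hE : M₂.E = M₁.E) (hfin : M₁.E.Finite)
    (S : Set α) (hS₁ : M₁.Indep S) (hS₂ : M₂.Indep S)
    (hlen : ShortestAugLenFour M₁ M₂ S)
    (B₁ A₁ B₂ : Set α) (haug : IsAugSet M₁ M₂ S B₁ A₁ B₂) :
    M₁.Indep ((S ∪ B₁ ∪ B₂) \ A₁) ∧ M₂.Indep ((S ∪ B₁ ∪ B₂) \ A₁) ∧
      ((S ∪ B₁ ∪ B₂) \ A₁).ncard = S.ncard + B₁.ncard :=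
  augset_augment_general M₁ M₂ hfin S hlen B₁ A₁ B₂ haug
end

section
/- Let S be a common independent set of matroids M1, M2 and suppose shortest augmenting paths in G(S) have length 4. Let Π be a maximal augmenting set in G(S). Then there is no augmenting path of length at most 4 in the exchange graph G(S ⊕ Π), where S ⊕ Π = S + B1 − A1 + B2. -/
open Set

variable {α : Type*}

/-!
Write `S' = (S ∪ B₁ ∪ B₂) \ A₁`; it has `|S| + |B₁|` elements. Given an `(s,t)`-path
`s → y₁ (→ y₂ → y₃) → t` in `G(S')`, augmenting `S ∪ B₁` in `M₁` from `S' + y₁` can only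
add `y₁`, because elements of `B₂` lie in `D₃`, not in `D₁`; and augmenting `S ∪ B₂` in `M₂`
from `S' + y₃` can only add `y₃`, because an element of `B₁` would give an `(s,t)`-path of
length `2` in `G(S)`. For a path of length `2` (`y₁ = y₃`) this already is such a path in
`G(S)`. For a path of length `4` the same counting places `y₂` in `(S \ A₁) ∩ D₂`, and the
fundamental circuit of `y₃` with respect to `S` in `M₁` places `y₃` in `D₃`, so
`(B₁ + y₁, A₁ + y₂, B₂ + y₃)` is a strictly larger augmenting set.
-/

namespace Matroid

variable {M : Matroid α} {I J : Set α} {e : α}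

lemma Indep.exists_insert_of_ncard_lt (hI : M.Indep I) (hJ : M.Indep J) (hIfin : I.Finite)
    (hJfin : J.Finite) (hIJ : I.ncard < J.ncard) : ∃ e ∈ J \ I, M.Indep (insert e I) :=
  hI.augment hJ <| by rw [← hIfin.cast_ncard_eq, ← hJfin.cast_ncard_eq]; exact_mod_cast hIJ

lemma Indep.insert_indep_of_ncard_le (hI : M.Indep I) (hJ : M.Indep (insert e J))
    (hIfin : I.Finite) (hJfin : J.Finite) (heJ : e ∉ J) (hIJ : I.ncard ≤ J.ncard)
    (hJI : ∀ f ∈ J \ I, ¬ M.Indep (insert f I)) : e ∉ I ∧ M.Indep (insert e I) := by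
  obtain ⟨f, ⟨hfJ, hfI⟩, hf⟩ := hI.exists_insert_of_ncard_lt hJ hIfin (hJfin.insert e)
    (by rw [ncard_insert_of_notMem heJ hJfin]; omega)
  obtain rfl | hfJ := mem_insert_iff.mp hfJ
  · exact ⟨hfI, hf⟩
  · exact absurd hf (hJI f ⟨hfJ, hfI⟩)

lemma Indep.exists_insert_sdiff_singleton_indep (hI : M.Indep I) (hIe : ¬ M.Indep (insert e I))
    (hJ : M.Indep (insert e J)) : ∃ f ∈ I \ J, M.Indep (insert e (I \ {f})) := by
  have heI : e ∉ I := fun he ↦ hIe (by rwa [insert_eq_of_mem he])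
  have hecl : e ∈ M.closure I :=
    hI.mem_closure_iff'.mpr ⟨hJ.subset_ground (mem_insert e J), fun h ↦ absurd h hIe⟩
  obtain ⟨f, hfC, hfJ⟩ := not_subset.mp fun hsub ↦
    (hI.fundCircuit_isCircuit hecl heI).not_indep (hJ.subset (J := insert e J) hsub)
  have hfe : f ≠ e := fun h ↦ hfJ (h ▸ mem_insert e J)
  have hfI : f ∈ I := (mem_insert_iff.mp (M.fundCircuit_subset_insert e I hfC)).resolve_left hfe
  refine ⟨f, ⟨hfI, fun h ↦ hfJ (mem_insert_of_mem e h)⟩, ?_⟩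
  rw [insert_sdiff_singleton_comm hfe.symm]
  exact (hI.mem_fundCircuit_iff hecl heI).mp hfC

end Matroid

section ExchangeGraph

variable {M₁ M₂ : Matroid α} {S : Set α} {v w : α} {l : List (ExV α)}

def NoLengthTwoAugPath (M₁ M₂ : Matroid α) (S : Set α) : Prop :=
  ∀ x ∉ S, M₁.Indep (insert x S) → ¬ M₂.Indep (insert x S)

lemma ShortestAugLenFour.noLengthTwoAugPath (h : ShortestAugLenFour M₁ M₂ S) :
    NoLengthTwoAugPath M₁ M₂ S := fun x hx h₁ h₂ ↦ by
  have := h.2 [.inr false, .inl x, .inr true]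
    ⟨show List.IsChain _ _ by simp [exAdj, hx, h₁, h₂], rfl, rfl⟩
  simp at this

lemma IsSPathTo.two_le_length (h : IsSPathTo M₁ M₂ S v l) : 2 ≤ l.length := by
  obtain ⟨-, hh, hl⟩ := h
  rcases l with _ | ⟨a, _ | ⟨b, l⟩⟩ <;> simp_all

lemma IsSPathTo.of_length_eq_two (h : IsSPathTo M₁ M₂ S v l) (hl : l.length = 2) :
    v ∉ S ∧ M₁.Indep (insert v S) := by
  obtain ⟨hc, hh, hg⟩ : l.IsChain (exAdj M₁ M₂ S) ∧ _ := h
  match l, hl with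
  | [a, b], _ => simp_all [List.isChain_cons_cons, exAdj]

lemma IsSPathTo.of_length_eq_three (h : IsSPathTo M₁ M₂ S v l) (hl : l.length = 3) :
    v ∈ S ∧ ∃ u ∉ S, M₁.Indep (insert u S) ∧ M₂.Indep (insert u (S \ {v})) := by
  obtain ⟨hc, hh, hg⟩ : l.IsChain (exAdj M₁ M₂ S) ∧ _ := h
  match l, hl with
  | [a, .inl u, c], _ => simp_all [List.isChain_cons_cons, exAdj]; tauto
  | [a, .inr b, c], _ => cases b <;> simp_all [List.isChain_cons_cons, exAdj]

lemma IsSPathTo.notMem_of_length_eq_four (h : IsSPathTo M₁ M₂ S v l) (hl : l.length = 4) :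
    v ∉ S := by
  obtain ⟨hc, hh, hg⟩ : l.IsChain (exAdj M₁ M₂ S) ∧ _ := h
  match l, hl with
  | [a, .inl u, .inl w, d], _ =>
    simp only [List.head?, List.getLast?, Option.some.injEq] at hh hg
    subst hh hg
    simp only [List.isChain_cons_cons, List.isChain_singleton, exAdj] at hc
    tauto
  | [a, .inr b, c, d], _ => cases b <;> simp_all [List.isChain_cons_cons, exAdj]
  | [a, .inl b, .inr c, d], _ => cases c <;> simp_all [List.isChain_cons_cons, exAdj]

lemma inLayer_one_iff : InLayer M₁ M₂ S 1 v ↔ v ∉ S ∧ M₁.Indep (insert v S) := by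
  refine ⟨fun ⟨⟨l, hl, hlen⟩, _⟩ ↦ hl.of_length_eq_two hlen, fun ⟨hv, hvS⟩ ↦ ⟨?_, ?_⟩⟩
  · exact ⟨[.inr false, .inl v], ⟨show List.IsChain _ _ by simp [exAdj, hv, hvS], rfl, rfl⟩, rfl⟩
  · exact fun l hl ↦ hl.two_le_length

lemma inLayer_two_iff : InLayer M₁ M₂ S 2 v ↔
    v ∈ S ∧ ∃ u ∉ S, M₁.Indep (insert u S) ∧ M₂.Indep (insert u (S \ {v})) := by
  refine ⟨fun ⟨⟨l, hl, hlen⟩, _⟩ ↦ hl.of_length_eq_three hlen,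
    fun ⟨hv, u, hu, huS, huv⟩ ↦ ⟨?_, fun l hl ↦ ?_⟩⟩
  · refine ⟨[.inr false, .inl u, .inl v], ⟨?_, rfl, rfl⟩, rfl⟩
    show List.IsChain _ _
    simp [List.isChain_cons_cons, exAdj, hu, huS, hv, huv]
  · have := hl.two_le_length
    have : l.length ≠ 2 := fun h ↦ (hl.of_length_eq_two h).1 hv
    omega

lemma notMem_and_not_indep_of_inLayer_three (h : InLayer M₁ M₂ S 3 v) :
    v ∉ S ∧ ¬ M₁.Indep (insert v S) := by
  obtain ⟨⟨l, hl, hlen⟩, hmin⟩ := h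
  refine ⟨hl.notMem_of_length_eq_four hlen, fun hvS ↦ ?_⟩
  have := hmin [.inr false, .inl v]
    ⟨show List.IsChain _ _ by simp [exAdj, hl.notMem_of_length_eq_four hlen, hvS], rfl, rfl⟩
  simp at this

lemma inLayer_three_of_inLayer_two (hv : v ∉ S) (hvS : ¬ M₁.Indep (insert v S))
    (hw : InLayer M₁ M₂ S 2 w) (hwv : M₁.Indep (insert v (S \ {w}))) :
    InLayer M₁ M₂ S 3 v := by
  obtain ⟨hwS, u, hu, huS, huw⟩ := inLayer_two_iff.mp hw
  refine ⟨⟨[.inr false, .inl u, .inl w, .inl v], ⟨?_, rfl, rfl⟩, rfl⟩, fun l hl ↦ ?_⟩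
  · show List.IsChain _ _
    simp [List.isChain_cons_cons, exAdj, hu, huS, hwS, huw, hv, hwv]
  · have := hl.two_le_length
    have : l.length ≠ 2 := fun h ↦ hvS (hl.of_length_eq_two h).2
    have : l.length ≠ 3 := fun h ↦ hv (hl.of_length_eq_three h).1
    omega

lemma inLayer_three_of_indep_insert_sdiff (hS : M₁.Indep S) (hv : v ∉ S)
    (hvS : ¬ M₁.Indep (insert v S)) {X : Set α} (hX : ∀ w ∈ X, InLayer M₁ M₂ S 2 w)
    (hvX : M₁.Indep (insert v (S \ X))) : InLayer M₁ M₂ S 3 v := by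
  obtain ⟨w, ⟨hwS, hwX⟩, hwv⟩ := hS.exists_insert_sdiff_singleton_indep hvS hvX
  exact inLayer_three_of_inLayer_two hv hvS (hX w (not_not.mp fun h ↦ hwX ⟨hwS, h⟩)) hwv

lemma inLayer_two_of_ncard_le (hS : M₂.Indep S) (hSfin : S.Finite) (hv : v ∈ S) {T : Set α}
    (hT : M₂.Indep T) (hTfin : T.Finite) (hvT : v ∉ T) (hST : S.ncard ≤ T.ncard)
    (hTS : ∀ u ∈ T \ S, M₁.Indep (insert u S)) : InLayer M₁ M₂ S 2 v := by
  have hSv : M₂.Indep (S \ {v}) := hS.subset sdiff_subset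
  obtain ⟨u, ⟨huT, huS⟩, hu⟩ := hSv.exists_insert_of_ncard_lt hT hSfin.sdiff hTfin
    (by have := ncard_sdiff_singleton_add_one hv hSfin; omega)
  have hu' : u ∉ S := fun h ↦ huS ⟨h, fun h' ↦ hvT (h' ▸ huT)⟩
  exact inLayer_two_iff.mpr ⟨hv, u, hu', hTS u ⟨huT, hu'⟩, hu⟩

lemma IsSTPath.cases_of_length_le_five (h : IsSTPath M₁ M₂ S l) (hl : l.length ≤ 5) :
    (∃ x ∉ S, M₁.Indep (insert x S) ∧ M₂.Indep (insert x S)) ∨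
    ∃ y₁ y₂ y₃, y₁ ∉ S ∧ y₂ ∈ S ∧ y₃ ∉ S ∧ M₁.Indep (insert y₁ S) ∧
      M₂.Indep (insert y₁ (S \ {y₂})) ∧ M₁.Indep (insert y₃ (S \ {y₂})) ∧
      M₂.Indep (insert y₃ S) := by
  obtain ⟨hc, hh, hg⟩ : l.IsChain (exAdj M₁ M₂ S) ∧ _ := h
  rcases l with _ | ⟨a, _ | ⟨b, _ | ⟨c, _ | ⟨d, _ | ⟨e, _ | ⟨f, l⟩⟩⟩⟩⟩⟩ <;>
    simp at hh hg hl <;> (try omega) <;> subst hh <;> (try simp at hg) <;> subst hg <;>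
    simp only [List.isChain_cons_cons, List.isChain_singleton, and_true] at hc
  · simp [exAdj] at hc
  · rcases b with x | _ | _ <;> simp only [exAdj, and_false] at hc
    exact .inl ⟨x, hc.1.1, hc.1.2, hc.2.2⟩
  · rcases b with y | _ | _ <;> rcases c with z | _ | _ <;>
      simp only [exAdj, false_and, and_false] at hc
    tauto
  · rcases b with y₁ | _ | _ <;> rcases c with y₂ | _ | _ <;> rcases d with y₃ | _ | _ <;>
      simp only [exAdj, false_and, and_false] at hc
    exact .inr ⟨y₁, y₂, y₃, by tauto⟩

end ExchangeGraph

lemma union_insert_sdiff_insert_subset (S B₁ A₁ B₂ : Set α) (y₁ y₂ : α) :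
    (S ∪ insert y₁ B₁) \ insert y₂ A₁ ⊆ insert y₁ (((S ∪ B₁ ∪ B₂) \ A₁) \ {y₂}) := by
  simp only [insert_eq]
  tauto_set

lemma sdiff_insert_union_insert_subset {S B₁ A₁ B₂ : Set α} {y₂ : α} (y₃ : α) (hA : A₁ ⊆ S)
    (hB : Disjoint S B₂) (hy₂ : y₂ ∈ S) :
    (S \ insert y₂ A₁) ∪ insert y₃ B₂ ⊆ insert y₃ (((S ∪ B₁ ∪ B₂) \ A₁) \ {y₂}) := by
  rintro z (⟨hzS, hz⟩ | rfl | hzB)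
  · exact .inr ⟨⟨.inl (.inl hzS), fun h ↦ hz (.inr h)⟩, fun h ↦ hz (.inl h)⟩
  · exact .inl rfl
  · have hzS : z ∉ S := Set.disjoint_right.mp hB hzB
    exact .inr ⟨⟨.inr hzB, fun h ↦ hzS (hA h)⟩, fun h ↦ hzS ((mem_singleton_iff.mp h) ▸ hy₂)⟩

namespace IsAugSet

variable {M₁ M₂ : Matroid α} {S B₁ A₁ B₂ : Set α} {y y₁ y₂ y₃ : α}

lemma subset (h : IsAugSet M₁ M₂ S B₁ A₁ B₂) : A₁ ⊆ S :=
  fun v hv ↦ (inLayer_two_iff.mp (h.2.1 v hv)).1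

lemma indep_insert_of_mem_left (h : IsAugSet M₁ M₂ S B₁ A₁ B₂) (hy : y ∈ B₁) :
    y ∉ S ∧ M₁.Indep (insert y S) :=
  inLayer_one_iff.mp (h.1 y hy)

lemma not_indep_insert_of_mem_right (h : IsAugSet M₁ M₂ S B₁ A₁ B₂) (hy : y ∈ B₂) :
    y ∉ S ∧ ¬ M₁.Indep (insert y S) :=
  notMem_and_not_indep_of_inLayer_three (h.2.2.1 y hy)

lemma disjoint_left (h : IsAugSet M₁ M₂ S B₁ A₁ B₂) : Disjoint S B₁ :=
  Set.disjoint_right.mpr fun _ hy ↦ (h.indep_insert_of_mem_left hy).1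

lemma disjoint_union_right (h : IsAugSet M₁ M₂ S B₁ A₁ B₂) : Disjoint (S ∪ B₁) B₂ := by
  refine Set.disjoint_right.mpr fun y hy hyS ↦ ?_
  obtain ⟨hyS', hdep⟩ := h.not_indep_insert_of_mem_right hy
  rcases hyS with hyS | hy₁
  · exact hyS' hyS
  · exact hdep (h.indep_insert_of_mem_left hy₁).2

lemma union_subset_ground (h : IsAugSet M₁ M₂ S B₁ A₁ B₂) : S ∪ B₁ ∪ B₂ ⊆ M₁.E := by
  obtain ⟨-, -, -, -, -, hI₁, -, hI₃, -⟩ := h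
  exact union_subset hI₁.subset_ground (subset_union_right.trans hI₃.subset_ground)

lemma ncard_union_left (hfin : (S ∪ B₁ ∪ B₂).Finite) (h : IsAugSet M₁ M₂ S B₁ A₁ B₂) :
    (S ∪ B₁).ncard = S.ncard + B₁.ncard :=
  ncard_union_eq h.disjoint_left (hfin.subset (by tauto_set)) (hfin.subset (by tauto_set))

lemma ncard_union_right (hfin : (S ∪ B₁ ∪ B₂).Finite) (h : IsAugSet M₁ M₂ S B₁ A₁ B₂) :
    (S ∪ B₂).ncard = S.ncard + B₁.ncard := by
  have hk₁ : B₁.ncard = A₁.ncard := h.2.2.2.1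
  have hk₂ : A₁.ncard = B₂.ncard := h.2.2.2.2.1
  rw [ncard_union_eq (h.disjoint_union_right.mono_left subset_union_left)
    (hfin.subset (by tauto_set)) (hfin.subset (by tauto_set)), hk₁, hk₂]

lemma ncard_union_sdiff (hfin : (S ∪ B₁ ∪ B₂).Finite) (h : IsAugSet M₁ M₂ S B₁ A₁ B₂) :
    ((S ∪ B₁) \ A₁).ncard = S.ncard := by
  have := ncard_sdiff_add_ncard_of_subset (h.subset.trans subset_union_left)
    (hfin.subset subset_union_left)
  have := h.ncard_union_left hfin
  have hk : B₁.ncard = A₁.ncard := h.2.2.2.1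
  omega

lemma ncard_sdiff_union (hfin : (S ∪ B₁ ∪ B₂).Finite) (h : IsAugSet M₁ M₂ S B₁ A₁ B₂) :
    ((S \ A₁) ∪ B₂).ncard = S.ncard := by
  have := ncard_sdiff_add_ncard_of_subset h.subset (hfin.subset (by tauto_set))
  rw [ncard_union_eq ((h.disjoint_union_right.mono_left (by tauto_set)))
    (hfin.subset (by tauto_set)) (hfin.subset (by tauto_set))]
  have hk : A₁.ncard = B₂.ncard := h.2.2.2.2.1
  omega

lemma ncard_union_union_sdiff (hfin : (S ∪ B₁ ∪ B₂).Finite) (h : IsAugSet M₁ M₂ S B₁ A₁ B₂) :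
    ((S ∪ B₁ ∪ B₂) \ A₁).ncard = S.ncard + B₁.ncard := by
  have := ncard_sdiff_add_ncard_of_subset (h.subset.trans (by tauto_set)) hfin
  rw [ncard_union_eq h.disjoint_union_right (hfin.subset subset_union_left)
    (hfin.subset subset_union_right), h.ncard_union_left hfin] at this
  have hk : A₁.ncard = B₂.ncard := h.2.2.2.2.1
  omega

lemma insert_indep_union_left (hfin : (S ∪ B₁ ∪ B₂).Finite) (h : IsAugSet M₁ M₂ S B₁ A₁ B₂)
    (hy : y ∉ (S ∪ B₁ ∪ B₂) \ A₁) (hyI : M₁.Indep (insert y ((S ∪ B₁ ∪ B₂) \ A₁))) :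
    y ∉ S ∪ B₁ ∧ M₁.Indep (insert y (S ∪ B₁)) := by
  have hI : M₁.Indep (S ∪ B₁) := h.2.2.2.2.2.1
  refine hI.insert_indep_of_ncard_le hyI (hfin.subset subset_union_left)
    (hfin.subset sdiff_subset) hy
    (by rw [h.ncard_union_union_sdiff hfin, h.ncard_union_left hfin]) ?_
  rintro f ⟨⟨hf | hf, -⟩, hfS⟩ hfI
  · exact hfS hf
  · exact (h.not_indep_insert_of_mem_right hf).2
      (hfI.subset (insert_subset_insert subset_union_left))

lemma insert_indep_union_right (hfin : (S ∪ B₁ ∪ B₂).Finite) (h : IsAugSet M₁ M₂ S B₁ A₁ B₂)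
    (hno : NoLengthTwoAugPath M₁ M₂ S) (hy : y ∉ (S ∪ B₁ ∪ B₂) \ A₁)
    (hyI : M₂.Indep (insert y ((S ∪ B₁ ∪ B₂) \ A₁))) :
    y ∉ S ∪ B₂ ∧ M₂.Indep (insert y (S ∪ B₂)) := by
  have hI : M₂.Indep (S ∪ B₂) := h.2.2.2.2.2.2.2.2
  refine hI.insert_indep_of_ncard_le hyI (hfin.subset (by tauto_set))
    (hfin.subset sdiff_subset) hy
    (by rw [h.ncard_union_union_sdiff hfin, h.ncard_union_right hfin]) ?_
  rintro f ⟨⟨(hf | hf) | hf, -⟩, hfS⟩ hfI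
  · exact hfS (.inl hf)
  · obtain ⟨hfS, hfI₁⟩ := h.indep_insert_of_mem_left hf
    exact hno f hfS hfI₁ (hfI.subset (insert_subset_insert subset_union_left))
  · exact hfS (.inr hf)

lemma noLengthTwoAugPath (hfin : (S ∪ B₁ ∪ B₂).Finite) (h : IsAugSet M₁ M₂ S B₁ A₁ B₂)
    (hno : NoLengthTwoAugPath M₁ M₂ S) : NoLengthTwoAugPath M₁ M₂ ((S ∪ B₁ ∪ B₂) \ A₁) := by
  intro x hx hx₁ hx₂
  obtain ⟨hxS, hx₁⟩ := h.insert_indep_union_left hfin hx hx₁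
  obtain ⟨-, hx₂⟩ := h.insert_indep_union_right hfin hno hx hx₂
  exact hno x (fun h ↦ hxS (.inl h)) (hx₁.subset (insert_subset_insert subset_union_left))
    (hx₂.subset (insert_subset_insert subset_union_left))

lemma not_indep_insert_union_sdiff (hfin : (S ∪ B₁ ∪ B₂).Finite)
    (h : IsAugSet M₁ M₂ S B₁ A₁ B₂) (hno : NoLengthTwoAugPath M₁ M₂ S) (hS : M₂.Indep S)
    (hy : y ∉ S ∪ B₁) (hyI : M₁.Indep (insert y S)) :
    ¬ M₂.Indep (insert y ((S ∪ B₁) \ A₁)) := by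
  intro hyI₂
  refine hno y (fun h ↦ hy (.inl h)) hyI (hS.insert_indep_of_ncard_le hyI₂
    (hfin.subset (by tauto_set)) (hfin.subset (by tauto_set)) (fun h ↦ hy h.1)
    (h.ncard_union_sdiff hfin).ge ?_).2
  rintro f ⟨⟨hf | hf, -⟩, hfS⟩ hfI
  · exact hfS hf
  · exact hno f hfS (h.indep_insert_of_mem_left hf).2 hfI

lemma not_indep_insert_sdiff_union (hfin : (S ∪ B₁ ∪ B₂).Finite)
    (h : IsAugSet M₁ M₂ S B₁ A₁ B₂) (hS : M₁.Indep S) (hy : y ∉ S ∪ B₂)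
    (hyI : ¬ M₁.Indep (insert y S)) : ¬ M₁.Indep (insert y ((S \ A₁) ∪ B₂)) := by
  intro hyI₁
  refine hyI (hS.insert_indep_of_ncard_le hyI₁ (hfin.subset (by tauto_set))
    (hfin.subset (by tauto_set)) (fun h ↦ hy (h.elim (fun h ↦ .inl h.1) .inr))
    (h.ncard_sdiff_union hfin).ge ?_).2
  rintro f ⟨hf | hf, hfS⟩
  · exact absurd hf.1 hfS
  · exact (h.not_indep_insert_of_mem_right hf).2

lemma mem_sdiff_of_augPath (hfin : (S ∪ B₁ ∪ B₂).Finite) (h : IsAugSet M₁ M₂ S B₁ A₁ B₂)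
    (hno : NoLengthTwoAugPath M₁ M₂ S) (hS₁ : M₁.Indep S) (hS₂ : M₂.Indep S)
    (hy₁ : y₁ ∉ S ∪ B₁) (hy₁I : M₁.Indep (insert y₁ S)) (hy₃ : y₃ ∉ S ∪ B₂)
    (hy₃I : ¬ M₁.Indep (insert y₃ S))
    (h₂ : M₂.Indep (insert y₁ (((S ∪ B₁ ∪ B₂) \ A₁) \ {y₂})))
    (h₃ : M₁.Indep (insert y₃ (((S ∪ B₁ ∪ B₂) \ A₁) \ {y₂}))) : y₂ ∈ S \ A₁ := by
  have hUS : (S \ A₁) ∪ B₂ ⊆ (S ∪ B₁ ∪ B₂) \ A₁ := by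
    have hB₂A₁ : Disjoint B₂ A₁ :=
      (h.disjoint_union_right.mono_left (h.subset.trans subset_union_left)).symm
    exact union_subset (sdiff_subset_sdiff (by tauto_set) le_rfl)
      (subset_sdiff.mpr ⟨by tauto_set, hB₂A₁⟩)
  have hV : y₂ ∈ (S ∪ B₁) \ A₁ := by_contra fun hy₂ ↦
    h.not_indep_insert_union_sdiff hfin hno hS₂ hy₁ hy₁I <| h₂.subset <| insert_subset_insert
      fun z hz ↦ ⟨⟨.inl hz.1, hz.2⟩, fun hzy ↦ hy₂ (hzy ▸ hz)⟩
  have hU : y₂ ∈ (S \ A₁) ∪ B₂ := by_contra fun hy₂ ↦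
    h.not_indep_insert_sdiff_union hfin hS₁ hy₃ hy₃I <| h₃.subset <| insert_subset_insert
      fun z hz ↦ ⟨hUS hz, fun hzy ↦ hy₂ (hzy ▸ hz)⟩
  exact hU.resolve_right (Set.disjoint_left.mp h.disjoint_union_right hV.1)

lemma inLayer_two_of_indep_sdiff (hfin : (S ∪ B₁ ∪ B₂).Finite) (h : IsAugSet M₁ M₂ S B₁ A₁ B₂)
    (hS : M₂.Indep S) (hy₁ : y₁ ∉ S ∪ B₁) (hy₁I : M₁.Indep (insert y₁ S)) (hy₂ : y₂ ∈ S \ A₁)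
    (hI : M₂.Indep ((S ∪ insert y₁ B₁) \ insert y₂ A₁)) : InLayer M₁ M₂ S 2 y₂ := by
  have hfin' : (S ∪ insert y₁ B₁).Finite := by
    rw [union_insert]; exact (hfin.subset subset_union_left).insert y₁
  have hcard := ncard_sdiff_add_ncard_of_subset
    (insert_subset (.inl hy₂.1) (h.subset.trans subset_union_left)) hfin'
  have hSB₁ : (S ∪ insert y₁ B₁).ncard = S.ncard + B₁.ncard + 1 := by
    rw [union_insert, ncard_insert_of_notMem hy₁ (hfin.subset subset_union_left),
      h.ncard_union_left hfin]
  have hA₁ : (insert y₂ A₁).ncard = A₁.ncard + 1 :=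
    ncard_insert_of_notMem hy₂.2 (hfin.subset (h.subset.trans (by tauto_set)))
  have hk : B₁.ncard = A₁.ncard := h.2.2.2.1
  refine inLayer_two_of_ncard_le hS (hfin.subset (by tauto_set)) hy₂.1 hI
    (hfin'.subset sdiff_subset) (fun h ↦ h.2 (mem_insert y₂ A₁)) (by omega) ?_
  rintro u ⟨⟨huS | rfl | hu, -⟩, huS'⟩
  · exact absurd huS huS'
  · exact hy₁I
  · exact (h.indep_insert_of_mem_left hu).2

lemma insert_of_augPath (hfin : (S ∪ B₁ ∪ B₂).Finite) (h : IsAugSet M₁ M₂ S B₁ A₁ B₂)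
    (hno : NoLengthTwoAugPath M₁ M₂ S) (hS₁ : M₁.Indep S) (hS₂ : M₂.Indep S)
    (hy₁ : y₁ ∉ (S ∪ B₁ ∪ B₂) \ A₁) (hy₃ : y₃ ∉ (S ∪ B₁ ∪ B₂) \ A₁)
    (h₁ : M₁.Indep (insert y₁ ((S ∪ B₁ ∪ B₂) \ A₁)))
    (h₂ : M₂.Indep (insert y₁ (((S ∪ B₁ ∪ B₂) \ A₁) \ {y₂})))
    (h₃ : M₁.Indep (insert y₃ (((S ∪ B₁ ∪ B₂) \ A₁) \ {y₂})))
    (h₄ : M₂.Indep (insert y₃ ((S ∪ B₁ ∪ B₂) \ A₁))) :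
    y₁ ∉ B₁ ∧ IsAugSet M₁ M₂ S (insert y₁ B₁) (insert y₂ A₁) (insert y₃ B₂) := by
  have ⟨hL₁, hL₂, hL₃, hk₁, hk₂, _⟩ := h
  obtain ⟨hy₁, hI₁⟩ := h.insert_indep_union_left hfin hy₁ h₁
  obtain ⟨hy₃, hI₄⟩ := h.insert_indep_union_right hfin hno hy₃ h₄
  have hy₁I : M₁.Indep (insert y₁ S) := hI₁.subset (insert_subset_insert subset_union_left)
  have hy₃I : ¬ M₁.Indep (insert y₃ S) := fun hI ↦ hno y₃ (fun h ↦ hy₃ (.inl h)) hI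
    (hI₄.subset (insert_subset_insert subset_union_left))
  have hy₂ := h.mem_sdiff_of_augPath hfin hno hS₁ hS₂ hy₁ hy₁I hy₃ hy₃I h₂ h₃
  have hI₂ : M₂.Indep ((S ∪ insert y₁ B₁) \ insert y₂ A₁) :=
    h₂.subset (union_insert_sdiff_insert_subset S B₁ A₁ B₂ y₁ y₂)
  have hI₃ : M₁.Indep ((S \ insert y₂ A₁) ∪ insert y₃ B₂) := h₃.subset <|
    sdiff_insert_union_insert_subset y₃ h.subset
      (h.disjoint_union_right.mono_left subset_union_left) hy₂.1
  have hy₂L := h.inLayer_two_of_indep_sdiff hfin hS₂ hy₁ hy₁I hy₂ hI₂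
  have hy₃L : InLayer M₁ M₂ S 3 y₃ :=
    inLayer_three_of_indep_insert_sdiff hS₁ (fun h ↦ hy₃ (.inl h)) hy₃I
      (forall_mem_insert.mpr ⟨hy₂L, hL₂⟩)
      (hI₃.subset (insert_subset (.inr (mem_insert y₃ B₂)) subset_union_left))
  have hSB₁fin := hfin.subset subset_union_left
  have hA₁fin := hSB₁fin.subset (h.subset.trans subset_union_left)
  refine ⟨fun h ↦ hy₁ (.inr h),
    forall_mem_insert.mpr ⟨inLayer_one_iff.mpr ⟨fun h ↦ hy₁ (.inl h), hy₁I⟩, hL₁⟩,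
    forall_mem_insert.mpr ⟨hy₂L, hL₂⟩, forall_mem_insert.mpr ⟨hy₃L, hL₃⟩, ?_, ?_,
    by rwa [union_insert], hI₂, hI₃, by rwa [union_insert]⟩
  · rw [ncard_insert_of_notMem (fun h ↦ hy₁ (.inr h)) (hSB₁fin.subset subset_union_right),
      ncard_insert_of_notMem hy₂.2 hA₁fin, hk₁]
  · rw [ncard_insert_of_notMem hy₂.2 hA₁fin,
      ncard_insert_of_notMem (fun h ↦ hy₃ (.inr h)) (hfin.subset subset_union_right), hk₂]

end IsAugSet

theorem maximal_augset_no_short_path_general {α : Type*} (M₁ M₂ : Matroid α)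
    (hfin : M₁.E.Finite)
    (S : Set α) (hS₁ : M₁.Indep S) (hS₂ : M₂.Indep S)
    (hlen : ShortestAugLenFour M₁ M₂ S)
    (B₁ A₁ B₂ : Set α) (haug : IsAugSet M₁ M₂ S B₁ A₁ B₂)
    (hmax : ∀ B₁' A₁' B₂', IsAugSet M₁ M₂ S B₁' A₁' B₂' →
      B₁ ⊆ B₁' → A₁ ⊆ A₁' → B₂ ⊆ B₂' → B₁' = B₁ ∧ A₁' = A₁ ∧ B₂' = B₂) :
    ∀ l : List (ExV α), IsSTPath M₁ M₂ ((S ∪ B₁ ∪ B₂) \ A₁) l → 6 ≤ l.length := by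
  intro l hl
  by_contra! hshort
  have hfin' := hfin.subset haug.union_subset_ground
  have hno := hlen.noLengthTwoAugPath
  obtain ⟨x, hx, h₁, h₂⟩ | ⟨y₁, y₂, y₃, hy₁, -, hy₃, h₁, h₂, h₃, h₄⟩ :=
    hl.cases_of_length_le_five (by omega)
  · exact haug.noLengthTwoAugPath hfin' hno x hx h₁ h₂
  · obtain ⟨hy₁B₁, haug'⟩ := haug.insert_of_augPath hfin' hno hS₁ hS₂ hy₁ hy₃ h₁ h₂ h₃ h₄
    have := (hmax _ _ _ haug' (subset_insert _ _) (subset_insert _ _) (subset_insert _ _)).1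
    exact hy₁B₁ (this ▸ mem_insert y₁ B₁)

/-- If `Π = (B₁, A₁, B₂)` is a maximal augmenting set in `G(S)` (where shortest
augmenting paths have length `4`), then `G(S ⊕ Π)` has no augmenting path of
length at most `4`. -/
theorem maximal_augset_no_short_path {α : Type*} (M₁ M₂ : Matroid α)
    (hE : M₂.E = M₁.E) (hfin : M₁.E.Finite)
    (S : Set α) (hS₁ : M₁.Indep S) (hS₂ : M₂.Indep S)
    (hlen : ShortestAugLenFour M₁ M₂ S)
    (B₁ A₁ B₂ : Set α) (haug : IsAugSet M₁ M₂ S B₁ A₁ B₂)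
    (hmax : ∀ B₁' A₁' B₂', IsAugSet M₁ M₂ S B₁' A₁' B₂' →
      B₁ ⊆ B₁' → A₁ ⊆ A₁' → B₂ ⊆ B₂' → B₁' = B₁ ∧ A₁' = A₁ ∧ B₂' = B₂) :
    ∀ l : List (ExV α), IsSTPath M₁ M₂ ((S ∪ B₁ ∪ B₂) \ A₁) l → 6 ≤ l.length :=
  maximal_augset_no_short_path_general M₁ M₂ hfin S hS₁ hS₂ hlen B₁ A₁ B₂ haug hmax
end

section
/- Termination bound for early-stopped augmentation: let r be the maximum size of a common independent set of two matroids, and let S be a common independent set obtained after all augmenting paths of length at most 2k have been exhausted (i.e., G(S) has no augmenting path of length ≤ 2k). Then |S| ≥ (1 − 1/(k+1))·r = (k/(k+1))·r; in particular, for k = 2, if G(S) has no augmenting path of length ≤ 4, then |S| ≥ (2/3)r. -/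
open Set

variable {α : Type*}

section Aux

variable {M₁ M₂ : Matroid α} {S : Set α}

/-- Elements reachable from `s` by a path with at most `m` edges. -/
def Reach (M₁ M₂ : Matroid α) (S : Set α) (m : ℕ) : Set α :=
  {v | ∃ l, IsSPathTo M₁ M₂ S v l ∧ l.length ≤ m + 1}

lemma reach_mono {m m' : ℕ} (h : m ≤ m') : Reach M₁ M₂ S m ⊆ Reach M₁ M₂ S m' :=
  fun _ ⟨l, hl, hlen⟩ => ⟨l, hl, hlen.trans (by omega)⟩

lemma reach_base {v : α} (h : exAdj M₁ M₂ S (Sum.inr false) (Sum.inl v)) {m : ℕ} (hm : 1 ≤ m) :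
    v ∈ Reach M₁ M₂ S m := by
  refine ⟨[Sum.inr false, Sum.inl v], ⟨?_, rfl, rfl⟩, by simp; omega⟩
  exact List.isChain_pair.mpr h

lemma snoc_path {v : α} {l : List (ExV α)} (h : IsSPathTo M₁ M₂ S v l) {w : ExV α}
    (hw : exAdj M₁ M₂ S (Sum.inl v) w) :
    (l ++ [w]).Chain' (exAdj M₁ M₂ S) ∧ (l ++ [w]).head? = some (Sum.inr false)
      ∧ (l ++ [w]).getLast? = some w := by
  obtain ⟨hc, hh, hl⟩ := h
  refine ⟨List.isChain_append.mpr ⟨hc, List.isChain_singleton w, ?_⟩, ?_, List.getLast?_concat⟩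
  · intro x hx y hy
    simp only [List.head?_cons, Option.mem_def, Option.some.injEq] at hy
    rw [Option.mem_def, hl, Option.some.injEq] at hx
    subst hx; subst hy; exact hw
  · rw [List.head?_append, hh]; rfl

lemma reach_succ {m : ℕ} {v w : α} (hv : v ∈ Reach M₁ M₂ S m)
    (hvw : exAdj M₁ M₂ S (Sum.inl v) (Sum.inl w)) : w ∈ Reach M₁ M₂ S (m + 1) := by
  obtain ⟨l, hl, hlen⟩ := hv
  exact ⟨l ++ [Sum.inl w], snoc_path hl hvw, by simp; omega⟩

lemma st_path_of_reach {m : ℕ} {v : α} (hv : v ∈ Reach M₁ M₂ S m) (h1 : v ∉ S)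
    (h2 : M₂.Indep (insert v S)) : ∃ l, IsSTPath M₁ M₂ S l ∧ l.length ≤ m + 2 := by
  obtain ⟨l, hl, hlen⟩ := hv
  have hadj : exAdj M₁ M₂ S (Sum.inl v) (Sum.inr true) := ⟨h1, h2⟩
  exact ⟨l ++ [Sum.inr true], snoc_path hl hadj, by simp; omega⟩

lemma mem_closure_exch {M : Matroid α} {S : Set α} {v : α} (hS : M.Indep S) (hSfin : S.Finite)
    (hv : v ∈ M.E) (hvS : v ∉ S) (hdep : ¬ M.Indep (insert v S)) :
    ∃ S' ⊆ S, v ∈ M.closure S' ∧ ∀ u ∈ S', M.Indep (insert v (S \ {u})) := by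
  have hvcl : v ∈ M.closure S := by
    by_contra h
    exact hdep ((hS.insert_indep_iff_of_notMem hvS).mpr ⟨hv, h⟩)
  have hfin : {X : Set α | X ⊆ S ∧ v ∈ M.closure X}.Finite :=
    hSfin.finite_subsets.subset fun X hX => hX.1
  obtain ⟨S', ⟨hS'sub, hS'cl⟩, hmin⟩ :=
    hfin.exists_minimal ⟨S, subset_rfl, hvcl⟩
  refine ⟨S', hS'sub, hS'cl, fun u hu => ?_⟩
  have huS : u ∈ S := hS'sub hu
  have hvS' : v ∉ S \ {u} := fun h => hvS h.1
  by_contra hbad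
  have hvclSu : v ∈ M.closure (S \ {u}) := by
    by_contra h
    exact hbad (((hS.subset diff_subset).insert_indep_iff_of_notMem hvS').mpr ⟨hv, h⟩)
  have h1 : v ∉ M.closure (S' \ {u}) := by
    intro hcon
    have hmem : (S' \ {u}) ∈ {X : Set α | X ⊆ S ∧ v ∈ M.closure X} :=
      ⟨diff_subset.trans hS'sub, hcon⟩
    have := hmin hmem (diff_subset : S' \ {u} ⊆ S')
    exact ((this hu : u ∈ S' \ {u}).2 rfl)
  have h2 : v ∈ M.closure (insert u (S' \ {u})) := by
    rwa [Set.insert_diff_singleton, Set.insert_eq_of_mem hu]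
  have h3 : u ∈ M.closure (insert v (S' \ {u})) := Matroid.mem_closure_insert h1 h2
  have h4 : M.closure (insert v (S \ {u})) = M.closure (S \ {u}) :=
    Matroid.closure_insert_eq_of_mem_closure hvclSu
  have h5 : u ∈ M.closure (S \ {u}) := by
    refine h4 ▸ (M.closure_subset_closure ?_ h3)
    exact insert_subset_insert (diff_subset_diff_left hS'sub)
  exact hS.notMem_closure_diff_of_mem huS h5

lemma ncard_le_of_indep_subset_closure {M : Matroid α} {I X : Set α} (hI : M.Indep I)
    (hX : M.Indep X) (hIX : I ⊆ M.closure X) (hXfin : X.Finite) : I.ncard ≤ X.ncard := by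
  obtain ⟨J, hJ, hIJ⟩ := hI.subset_isBasis_of_subset hIX (M.closure_subset_ground X)
  have hXb : M.IsBasis X (M.closure X) := hX.isBasis_closure
  have hcard : J.encard = X.encard := hJ.encard_eq_encard hXb
  have hle : I.encard ≤ X.encard := hcard ▸ Set.encard_mono hIJ
  rw [Set.ncard, Set.ncard]
  exact ENat.toNat_le_toNat hle hXfin.encard_lt_top.ne

end Aux

/-- If the exchange graph `G(S)` contains no `(s,t)`-path of length at most
`2k`, then `|S| ≥ (k/(k+1)) r`. -/
theorem no_short_path_approx {α : Type*} (M₁ M₂ : Matroid α)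
    (hE : M₂.E = M₁.E) (hfin : M₁.E.Finite)
    (S : Set α) (hS₁ : M₁.Indep S) (hS₂ : M₂.Indep S)
    (k : ℕ) (hk : 0 < k)
    (hlong : ∀ l : List (ExV α), IsSTPath M₁ M₂ S l → 2 * k + 2 ≤ l.length)
    (r : ℕ) (hr : IsGreatest {n | ∃ T, M₁.Indep T ∧ M₂.Indep T ∧ T.ncard = n} r) :
    ((k : ℚ) / (k + 1)) * r ≤ S.ncard := by
  classical
  obtain ⟨⟨T, hT₁, hT₂, hTcard⟩, -⟩ := hr
  have hSE : S ⊆ M₁.E := hS₁.subset_ground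
  have hSfin : S.Finite := hfin.subset hSE
  have hTfin : T.Finite := hfin.subset hT₁.subset_ground
  have key : ∀ j, j < k →
      r + (S ∩ Reach M₁ M₂ S (2*j)).ncard ≤ S.ncard + (S ∩ Reach M₁ M₂ S (2*j+2)).ncard := by
    intro j hj
    have hA : T ∩ Reach M₁ M₂ S (2*j+1) ⊆ M₂.closure (S ∩ Reach M₁ M₂ S (2*j+2)) := by
      rintro v ⟨hvT, hvR⟩
      by_cases hvS : v ∈ S
      · exact M₂.subset_closure _ (fun x hx => hS₂.subset_ground hx.1)
          ⟨hvS, reach_mono (by omega) hvR⟩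
      have hdep : ¬ M₂.Indep (insert v S) := by
        intro hind
        obtain ⟨l, hl, hlen⟩ := st_path_of_reach hvR hvS hind
        have := hlong l hl
        omega
      obtain ⟨S', hS'sub, hS'cl, hS'exch⟩ :=
        mem_closure_exch hS₂ hSfin (hT₂.subset_ground hvT) hvS hdep
      refine (M₂.closure_subset_closure ?_) hS'cl
      intro u hu
      exact ⟨hS'sub hu, reach_succ hvR (Or.inr ⟨hvS, hS'sub hu, hS'exch u hu⟩)⟩
    have hB : T \ Reach M₁ M₂ S (2*j+1) ⊆ M₁.closure (S \ Reach M₁ M₂ S (2*j)) := by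
      rintro v ⟨hvT, hvR⟩
      by_cases hvS : v ∈ S
      · exact M₁.subset_closure _ (fun x hx => hSE hx.1)
          ⟨hvS, fun h => hvR (reach_mono (by omega) h)⟩
      have hdep : ¬ M₁.Indep (insert v S) := by
        intro hind
        exact hvR (reach_base ⟨hvS, hind⟩ (by omega))
      obtain ⟨S', hS'sub, hS'cl, hS'exch⟩ :=
        mem_closure_exch hS₁ hSfin (hT₁.subset_ground hvT) hvS hdep
      refine (M₁.closure_subset_closure ?_) hS'cl
      intro u hu
      refine ⟨hS'sub hu, fun huR => hvR ?_⟩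
      exact reach_succ huR (Or.inl ⟨hS'sub hu, hvS, hS'exch u hu⟩)
    have c1 : (T ∩ Reach M₁ M₂ S (2*j+1)).ncard ≤ (S ∩ Reach M₁ M₂ S (2*j+2)).ncard :=
      ncard_le_of_indep_subset_closure (hT₂.subset inter_subset_left)
        (hS₂.subset inter_subset_left) hA (hSfin.subset inter_subset_left)
    have c2 : (T \ Reach M₁ M₂ S (2*j+1)).ncard ≤ (S \ Reach M₁ M₂ S (2*j)).ncard :=
      ncard_le_of_indep_subset_closure (hT₁.subset diff_subset)
        (hS₁.subset diff_subset) hB (hSfin.subset diff_subset)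
    have e1 : (T ∩ Reach M₁ M₂ S (2*j+1)).ncard + (T \ Reach M₁ M₂ S (2*j+1)).ncard = T.ncard :=
      Set.ncard_inter_add_ncard_diff_eq_ncard T _ hTfin
    have e2 : (S ∩ Reach M₁ M₂ S (2*j)).ncard + (S \ Reach M₁ M₂ S (2*j)).ncard = S.ncard :=
      Set.ncard_inter_add_ncard_diff_eq_ncard S _ hSfin
    omega
  have tel : ∀ j, j ≤ k → j * r ≤ j * S.ncard + (S ∩ Reach M₁ M₂ S (2*j)).ncard := by
    intro j
    induction j with
    | zero => simp
    | succ n ih =>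
      intro hn
      have h1 := ih (by omega)
      have h2 := key n (by omega)
      have e1 : (n+1) * r = n * r + r := by ring
      have e2 : (n+1) * S.ncard = n * S.ncard + S.ncard := by ring
      have e3 : 2*(n+1) = 2*n+2 := by ring
      rw [e1, e2, e3]
      linarith
  have hfk : (S ∩ Reach M₁ M₂ S (2*k)).ncard ≤ S.ncard :=
    Set.ncard_le_ncard inter_subset_left hSfin
  have hmain : k * r ≤ (k+1) * S.ncard := by
    have h1 := tel k le_rfl
    have e2 : (k+1) * S.ncard = k * S.ncard + S.ncard := by ring
    linarith
  have hk1 : (0:ℚ) < (k:ℚ) + 1 := by positivity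
  rw [div_mul_eq_mul_div, div_le_iff₀ hk1]
  have hq : ((k:ℚ)) * r ≤ ((k:ℚ)+1) * S.ncard := by exact_mod_cast hmain
  linarith
end

section
/- Partial-to-full augmenting set extraction (existence version): given a partial augmenting set Φ = (B1, A1, B2) in G(S) (where shortest augmenting paths have length 4), there exist subsets B1' ⊆ B1 and A1' ⊆ A1 such that (B1', A1', B2) is an augmenting set of width |B2|. -/
open Set

variable {α : Type*}

/-- The rank of a set `X` in a matroid `M`: the maximum size of an independent
subset of `X`. -/
noncomputable def mRank (M : Matroid α) (X : Set α) : ℕ :=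
  sSup {n | ∃ I, I ⊆ X ∧ M.Indep I ∧ I.ncard = n}

/-!
Choose `A₁'` in `M₁` first: a basis of `S ∪ B₂` through `(S \ A₁) ∪ B₂` has at least `|S|`
elements, so it misses at most `|B₂|` elements of `S`, all of them in `A₁`; any `A₁' ⊆ A₁` of size
`|B₂|` containing them keeps `(S \ A₁') ∪ B₂` independent. Then, in `M₂`, the rank condition gives
an independent subset of `(S ∪ B₁) \ A₁'` of size `|S|`, so a basis of that set through `S \ A₁'`
has at least `|A₁'|` elements in `B₁`; `B₁'` is any `|B₂|` of them.
-/

namespace Matroid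

variable {M : Matroid α} {I J X S A B : Set α}

lemma Indep.exists_indep_superset_ncard_le (hJ : M.Indep J) (hI : M.Indep I) (hJX : J ⊆ X)
    (hIX : I ⊆ X) (hX : X.Finite) : ∃ K, J ⊆ K ∧ K ⊆ X ∧ M.Indep K ∧ I.ncard ≤ K.ncard := by
  obtain ⟨K, hK, hJK⟩ := hJ.subset_isBasis'_of_subset hJX
  refine ⟨K, hJK, hK.subset, hK.indep, ?_⟩
  have hIK : I.encard ≤ K.encard := hK.encard_eq_eRk ▸ hI.encard_le_eRk_of_subset hIX
  rw [ncard_def, ncard_def]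
  exact ENat.toNat_le_toNat hIK (hX.subset hK.subset).encard_lt_top.ne

lemma Indep.exists_subset_ncard_eq_indep_diff_union (hS : M.Indep S) (hSfin : S.Finite)
    (hBfin : B.Finite) (h : M.Indep (S \ A ∪ B)) (hcard : B.ncard ≤ A.ncard) :
    ∃ A' ⊆ A, A'.ncard = B.ncard ∧ M.Indep (S \ A' ∪ B) := by
  obtain ⟨K, hK, hKX, hKi, hSK⟩ := h.exists_indep_superset_ncard_le hS
    (union_subset_union_left B sdiff_subset) subset_union_left (hSfin.union hBfin)
  have hdrop : S \ K ⊆ A := fun x hx ↦ by_contra fun hxA ↦ hx.2 (hK (.inl ⟨hx.1, hxA⟩))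
  have hdrop_card : (S \ K).ncard ≤ B.ncard := by
    have hK_sub : K ⊆ S ∩ K ∪ B := fun x hx ↦ (hKX hx).imp_left (⟨·, hx⟩)
    have := (ncard_le_ncard hK_sub ((hSfin.inter_of_left K).union hBfin)).trans
      (ncard_union_le _ _)
    have := ncard_inter_add_ncard_sdiff_eq_ncard S K hSfin
    omega
  obtain ⟨A', hdropA', hA'A, hA'⟩ := exists_subsuperset_card_eq hdrop hdrop_card hcard
  refine ⟨A', hA'A, hA', hKi.subset (union_subset (fun x hx ↦ ?_) (subset_union_right.trans hK))⟩
  by_contra hxK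
  exact hx.2 (hdropA' ⟨hx.1, hxK⟩)

lemma Indep.exists_subset_ncard_eq_indep_union_diff (hSA : M.Indep (S \ A)) (hA : A ⊆ S)
    (hSfin : S.Finite) (hBfin : B.Finite) (hI : M.Indep I) (hIX : I ⊆ (S ∪ B) \ A)
    (hcard : S.ncard ≤ I.ncard) :
    ∃ B' ⊆ B, B'.ncard = A.ncard ∧ M.Indep ((S ∪ B') \ A) := by
  obtain ⟨K, hSK, hKX, hKi, hIK⟩ := hSA.exists_indep_superset_ncard_le hI
    (sdiff_subset_sdiff_left subset_union_left) hIX ((hSfin.union hBfin).sdiff)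
  have hnew : K \ S ⊆ B := fun x hx ↦ ((hKX hx.1).1).resolve_left hx.2
  have hnew_card : A.ncard ≤ (K \ S).ncard := by
    have hK_sub : K ⊆ S \ A ∪ K \ S := fun x hx ↦
      (em (x ∈ S)).imp (⟨·, (hKX hx).2⟩) (⟨hx, ·⟩)
    have := (ncard_le_ncard hK_sub (hSfin.sdiff.union (hBfin.subset hnew))).trans
      (ncard_union_le _ _)
    have := ncard_sdiff_add_ncard_of_subset hA hSfin
    omega
  obtain ⟨B', hB'new, hB'⟩ := exists_subset_card_eq hnew_card
  refine ⟨B', hB'new.trans hnew, hB', hKi.subset fun x hx ↦ ?_⟩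
  rcases hx.1 with hxS | hxB'
  · exact hSK ⟨hxS, hx.2⟩
  · exact (hB'new hxB').1

end Matroid

section mRank

variable {I X : Set α}

lemma bddAbove_ncard_indep_subsets (M : Matroid α) (hX : X.Finite) :
    BddAbove {n | ∃ I, I ⊆ X ∧ M.Indep I ∧ I.ncard = n} :=
  ⟨X.ncard, by rintro _ ⟨I, hIX, -, rfl⟩; exact ncard_le_ncard hIX hX⟩

lemma Matroid.Indep.ncard_le_mRank {M : Matroid α} (hI : M.Indep I) (hIX : I ⊆ X)
    (hX : X.Finite) : I.ncard ≤ mRank M X :=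
  le_csSup (bddAbove_ncard_indep_subsets M hX) ⟨I, hIX, hI, rfl⟩

lemma exists_indep_ncard_eq_mRank (M : Matroid α) (hX : X.Finite) :
    ∃ I, I ⊆ X ∧ M.Indep I ∧ I.ncard = mRank M X :=
  Nat.sSup_mem (s := {n | ∃ I, I ⊆ X ∧ M.Indep I ∧ I.ncard = n})
    ⟨0, ∅, empty_subset X, M.empty_indep, ncard_empty α⟩ (bddAbove_ncard_indep_subsets M hX)

end mRank

lemma mem_of_inLayer_two {M₁ M₂ : Matroid α} {S : Set α} {v : α}
    (h : InLayer M₁ M₂ S 2 v) : v ∈ S := by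
  obtain ⟨⟨l, ⟨hc, hh, hl⟩, hlen⟩, -⟩ := h
  obtain ⟨a, b, c, rfl⟩ := List.length_eq_three.mp hlen
  obtain rfl : a = Sum.inr false := by simpa using hh
  obtain rfl : c = Sum.inl v := by simpa using hl
  rw [List.Chain', List.isChain_cons_cons, List.isChain_cons_cons] at hc
  obtain ⟨e1, e2, -⟩ := hc
  rcases b with u | (_ | _) <;> simp only [exAdj] at e1 e2
  tauto

theorem partial_to_full_augset_general {α : Type*} (M₁ M₂ : Matroid α)
    (hfin : M₁.E.Finite)
    (S : Set α) (hS₁ : M₁.Indep S) (hS₂ : M₂.Indep S)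
    (B₁ A₁ B₂ : Set α)
    (hB₁ : ∀ v ∈ B₁, InLayer M₁ M₂ S 1 v)
    (hA₁ : ∀ v ∈ A₁, InLayer M₁ M₂ S 2 v)
    (hB₂ : ∀ v ∈ B₂, InLayer M₁ M₂ S 3 v)
    (hc₂ : B₂.ncard ≤ A₁.ncard)
    (h1 : M₁.Indep (S ∪ B₁))
    (h2 : mRank M₂ ((S ∪ B₁) \ A₁) = mRank M₂ S)
    (h3 : M₁.Indep ((S \ A₁) ∪ B₂))
    (h4 : M₂.Indep (S ∪ B₂)) :
    ∃ B₁' ⊆ B₁, ∃ A₁' ⊆ A₁,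
      IsAugSet M₁ M₂ S B₁' A₁' B₂ ∧ B₁'.ncard = B₂.ncard := by
  have hA₁S : A₁ ⊆ S := fun v hv ↦ mem_of_inLayer_two (hA₁ v hv)
  have hSfin : S.Finite := hfin.subset hS₁.subset_ground
  have hB₁fin : B₁.Finite := hfin.subset (subset_union_right.trans h1.subset_ground)
  have hB₂fin : B₂.Finite := hfin.subset (subset_union_right.trans h3.subset_ground)
  obtain ⟨A₁', hA₁'A₁, hA₁', hM₁⟩ :=
    hS₁.exists_subset_ncard_eq_indep_diff_union hSfin hB₂fin h3 hc₂
  obtain ⟨I, hI, hIi, hIcard⟩ :=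
    exists_indep_ncard_eq_mRank M₂ ((hSfin.union hB₁fin).sdiff (t := A₁))
  have hSI : S.ncard ≤ I.ncard := hIcard ▸ h2 ▸ hS₂.ncard_le_mRank subset_rfl hSfin
  obtain ⟨B₁', hB₁'B₁, hB₁', hM₂⟩ :=
    (hS₂.subset sdiff_subset).exists_subset_ncard_eq_indep_union_diff (hA₁'A₁.trans hA₁S)
      hSfin hB₁fin hIi (hI.trans (sdiff_subset_sdiff_right hA₁'A₁)) hSI
  refine ⟨B₁', hB₁'B₁, A₁', hA₁'A₁, ⟨fun v hv ↦ hB₁ v (hB₁'B₁ hv),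
    fun v hv ↦ hA₁ v (hA₁'A₁ hv), hB₂, hB₁', hA₁', h1.subset (union_subset_union_right S hB₁'B₁),
    hM₂, hM₁, h4⟩, hB₁'.trans hA₁'⟩

/-- Extraction of a (full) augmenting set from a partial augmenting set: if
`Φ = (B₁, A₁, B₂)` is a partial augmenting set in `G(S)` (shortest augmenting
paths of length `4`), then there are `B₁' ⊆ B₁` and `A₁' ⊆ A₁` such that
`(B₁', A₁', B₂)` is an augmenting set of width `|B₂|`. -/
theorem partial_to_full_augset {α : Type*} (M₁ M₂ : Matroid α)
    (hE : M₂.E = M₁.E) (hfin : M₁.E.Finite)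
    (S : Set α) (hS₁ : M₁.Indep S) (hS₂ : M₂.Indep S)
    (hlen : ShortestAugLenFour M₁ M₂ S)
    (B₁ A₁ B₂ : Set α)
    (hB₁ : ∀ v ∈ B₁, InLayer M₁ M₂ S 1 v)
    (hA₁ : ∀ v ∈ A₁, InLayer M₁ M₂ S 2 v)
    (hB₂ : ∀ v ∈ B₂, InLayer M₁ M₂ S 3 v)
    (hc₁ : A₁.ncard ≤ B₁.ncard) (hc₂ : B₂.ncard ≤ A₁.ncard)
    (h1 : M₁.Indep (S ∪ B₁))
    (h2 : mRank M₂ ((S ∪ B₁) \ A₁) = mRank M₂ S)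
    (h3 : M₁.Indep ((S \ A₁) ∪ B₂))
    (h4 : M₂.Indep (S ∪ B₂)) :
    ∃ B₁' ⊆ B₁, ∃ A₁' ⊆ A₁,
      IsAugSet M₁ M₂ S B₁' A₁' B₂ ∧ B₁'.ncard = B₂.ncard :=
  partial_to_full_augset_general M₁ M₂ hfin S hS₁ hS₂ B₁ A₁ B₂ hB₁ hA₁ hB₂ hc₂ h1 h2 h3 h4
end
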